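/- arXiv:2209.05288 — 9 statements merged into one kernel-verified Lean document; each statement's English description precedes it below -/
import Mathlib

section
/- Let 1 < p < ∞ be real and let a : ℕ → ℝ be a sequence of nonnegative real numbers indexed by the positive integers with only finitely many nonzero terms (equivalently, with ∑_{n=1}^∞ a_n^p < ∞). Then ∑_{n=1}^∞ ((1/n) ∑_{k=1}^n a_k)^p ≤ (p/(p-1))^p ∑_{n=1}^∞ a_n^p. -/
open Finset

private lemma hardy_key (p : ℝ) (hp : 1 < p) (a : ℕ → ℝ) (ha : ∀ n, 0 ≤ a n) (N : ℕ) :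
    ∑ n ∈ Finset.range N, ((1 / ((n : ℝ) + 1)) * ∑ k ∈ Finset.range (n + 1), a k) ^ p
      ≤ (p / (p - 1)) ^ p * ∑ n ∈ Finset.range N, a n ^ p := by
  have hp1 : (0:ℝ) < p - 1 := by linarith
  have hp0 : (0:ℝ) < p := by linarith
  set q : ℝ := p / (p - 1) with hq
  have hq0 : 0 < q := by positivity
  have hpq : p.HolderConjugate q := Real.HolderConjugate.conjExponent hp
  set α : ℕ → ℝ := fun n => (1 / ((n : ℝ) + 1)) * ∑ k ∈ Finset.range (n + 1), a k with hα
  have hαnn : ∀ n, 0 ≤ α n := by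
    intro n
    apply mul_nonneg (by positivity)
    exact Finset.sum_nonneg fun k _ => ha k
  have hrel : ∀ n : ℕ, a n = ((n : ℝ) + 1) * α n - (n : ℝ) * α (n - 1) := by
    intro n
    cases n with
    | zero => simp [hα]
    | succ m =>
      have h1 : ((m : ℝ) + 1) ≠ 0 := by positivity
      have h2 : ((m : ℝ) + 1 + 1) ≠ 0 := by positivity
      simp only [hα, Nat.add_sub_cancel]
      push_cast
      rw [Finset.sum_range_succ (n := m + 1)]
      field_simp
      ring
  set G : ℕ → ℝ := fun n => (n : ℝ) * α (n - 1) ^ p with hG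
  have hGnn : ∀ n, 0 ≤ G n := fun n =>
    mul_nonneg (Nat.cast_nonneg n) (Real.rpow_nonneg (hαnn _) p)
  have key : ∀ n : ℕ,
      (p - 1) * α n ^ p ≤ p * (a n * α n ^ (p - 1)) + (G n - G (n + 1)) := by
    intro n
    have hY : α n * α n ^ (p - 1) = α n ^ p := by
      have h := (Real.rpow_add' (hαnn n) (y := 1) (z := p - 1)
        (by intro h; linarith)).symm
      rw [Real.rpow_one] at h
      rw [h]
      norm_num
    have hyoung : p * (α (n - 1) * α n ^ (p - 1))
        ≤ α (n - 1) ^ p + (p - 1) * α n ^ p := by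
      have h := Real.young_inequality_of_nonneg (hαnn (n - 1))
        (Real.rpow_nonneg (hαnn n) (p - 1)) hpq
      rw [← Real.rpow_mul (hαnn n), hpq.sub_one_mul_conj] at h
      have h2 := mul_le_mul_of_nonneg_left h hp0.le
      have e : p * (α (n - 1) ^ p / p + α n ^ p / q)
          = α (n - 1) ^ p + (p - 1) * α n ^ p := by
        rw [hq]
        field_simp
      linarith
    have hG1 : G (n + 1) = ((n : ℝ) + 1) * α n ^ p := by
      simp only [hG, Nat.add_sub_cancel]
      push_cast
      ring
    have hG0 : G n = (n : ℝ) * α (n - 1) ^ p := rfl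
    rw [hrel n, hG1, hG0]
    have hYc : p * ((n : ℝ) + 1) * (α n * α n ^ (p - 1))
        = p * ((n : ℝ) + 1) * α n ^ p := by rw [hY]
    have hyc := mul_le_mul_of_nonneg_left hyoung (Nat.cast_nonneg n : (0:ℝ) ≤ (n : ℝ))
    nlinarith [hYc, hyc]
  have goal_eq : ∑ n ∈ Finset.range N,
      ((1 / ((n : ℝ) + 1)) * ∑ k ∈ Finset.range (n + 1), a k) ^ p
      = ∑ n ∈ Finset.range N, α n ^ p := rfl
  rw [goal_eq]
  set S := ∑ n ∈ Finset.range N, α n ^ p with hS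
  set T := ∑ n ∈ Finset.range N, a n ^ p with hT
  have hSnn : 0 ≤ S := Finset.sum_nonneg fun n _ => Real.rpow_nonneg (hαnn n) p
  have hTnn : 0 ≤ T := Finset.sum_nonneg fun n _ => Real.rpow_nonneg (ha n) p
  have sum1 : (p - 1) * S ≤ p * ∑ n ∈ Finset.range N, a n * α n ^ (p - 1) := by
    have tele : ∑ n ∈ Finset.range N, (G n - G (n + 1)) = G 0 - G N :=
      Finset.sum_range_sub' G N
    have hG0 : G 0 = 0 := by simp [hG]
    calc (p - 1) * S = ∑ n ∈ Finset.range N, (p - 1) * α n ^ p := by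
          rw [hS, Finset.mul_sum]
      _ ≤ ∑ n ∈ Finset.range N, (p * (a n * α n ^ (p - 1)) + (G n - G (n + 1))) :=
          Finset.sum_le_sum fun n _ => key n
      _ = p * ∑ n ∈ Finset.range N, a n * α n ^ (p - 1) + (G 0 - G N) := by
          rw [Finset.sum_add_distrib, tele, ← Finset.mul_sum]
      _ ≤ _ := by
          have := hGnn N
          rw [hG0]
          linarith
  have holder : ∑ n ∈ Finset.range N, a n * α n ^ (p - 1)
      ≤ T ^ (1 / p) * S ^ (1 / q) := by
    have h := Real.inner_le_Lp_mul_Lq_of_nonneg (s := Finset.range N)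
      (f := a) (g := fun n => α n ^ (p - 1)) hpq
      (fun i _ => ha i) (fun i _ => Real.rpow_nonneg (hαnn i) _)
    have e : ∑ n ∈ Finset.range N, (α n ^ (p - 1)) ^ q = S := by
      rw [hS]
      refine Finset.sum_congr rfl fun n _ => ?_
      rw [← Real.rpow_mul (hαnn n), hpq.sub_one_mul_conj]
    rwa [e, ← hT] at h
  rcases eq_or_lt_of_le hSnn with hS0 | hS0
  · rw [← hS0]
    exact mul_nonneg (Real.rpow_nonneg hq0.le p) hTnn
  · have hSq : (0:ℝ) < S ^ (1 / q) := Real.rpow_pos_of_pos hS0 _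
    have hsplit : S = S ^ (1 / p) * S ^ (1 / q) := by
      rw [← Real.rpow_add hS0, one_div, one_div, hpq.inv_add_inv_eq_one, Real.rpow_one]
    have h2 : (p - 1) * (S ^ (1 / p) * S ^ (1 / q)) ≤ p * (T ^ (1 / p) * S ^ (1 / q)) := by
      rw [← hsplit]
      exact sum1.trans (mul_le_mul_of_nonneg_left holder hp0.le)
    have h3 : (p - 1) * S ^ (1 / p) ≤ p * T ^ (1 / p) := by
      have h2' : ((p - 1) * S ^ (1 / p)) * S ^ (1 / q)
          ≤ (p * T ^ (1 / p)) * S ^ (1 / q) := by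
        calc ((p - 1) * S ^ (1 / p)) * S ^ (1 / q)
            = (p - 1) * (S ^ (1 / p) * S ^ (1 / q)) := by ring
          _ ≤ p * (T ^ (1 / p) * S ^ (1 / q)) := h2
          _ = (p * T ^ (1 / p)) * S ^ (1 / q) := by ring
      exact le_of_mul_le_mul_right h2' hSq
    have hfinal : S ^ (1 / p) ≤ q * T ^ (1 / p) := by
      rw [hq, div_mul_eq_mul_div, le_div_iff₀ hp1]
      linarith
    have h4 := Real.rpow_le_rpow (Real.rpow_nonneg hSnn _) hfinal hp0.le
    rw [← Real.rpow_mul hSnn, one_div_mul_cancel hp0.ne', Real.rpow_one,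
      Real.mul_rpow hq0.le (Real.rpow_nonneg hTnn _), ← Real.rpow_mul hTnn,
      one_div_mul_cancel hp0.ne', Real.rpow_one] at h4
    exact h4

/-- **Classical discrete Hardy (Hardy–Landau) inequality.**
Sequences indexed by the positive integers are encoded as `a : ℕ → ℝ`, where `a n`
represents the term `a_{n+1}`; thus `∑ k ∈ Finset.range (n+1), a k = ∑_{k=1}^{n+1} a_k`
and `∑' n, a n ^ p = ∑_{n=1}^∞ a_n ^ p`. -/
theorem discrete_hardy_inequality (p : ℝ) (hp : 1 < p)
    (a : ℕ → ℝ) (ha : ∀ n, 0 ≤ a n) (hfin : (Function.support a).Finite) :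
    ∑' n : ℕ, ((1 / ((n : ℝ) + 1)) * ∑ k ∈ Finset.range (n + 1), a k) ^ p
      ≤ (p / (p - 1)) ^ p * ∑' n : ℕ, a n ^ p := by
  have hp0 : (0:ℝ) < p := by linarith
  have hsum : Summable (fun n => a n ^ p) := by
    apply summable_of_finite_support
    apply hfin.subset
    intro n hn
    simp only [Function.mem_support] at hn ⊢
    intro h
    exact hn (by rw [h, Real.zero_rpow hp0.ne'])
  have hC : (0:ℝ) ≤ (p / (p - 1)) ^ p :=
    Real.rpow_nonneg (div_nonneg (by linarith) (by linarith)) p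
  refine Real.tsum_le_of_sum_range_le (fun n => ?_) (fun N => ?_)
  · refine Real.rpow_nonneg ?_ p
    refine mul_nonneg ?_ (Finset.sum_nonneg fun k _ => ha k)
    positivity
  refine (hardy_key p hp a ha N).trans ?_
  gcongr
  exact Summable.sum_le_tsum (Finset.range N) (fun i _ => Real.rpow_nonneg (ha i) p) hsum
end

section
/- Let 1 < p < ∞ be real. For every constant C < (p/(p-1))^p there exists a nonnegative sequence a : ℕ → ℝ indexed by the positive integers with finite support such that ∑_{n=1}^∞ ((1/n) ∑_{k=1}^n a_k)^p > C ∑_{n=1}^∞ a_n^p. In other words, the constant (p/(p-1))^p in the discrete Hardy inequality is sharp. -/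
open Real Filter Finset Topology

lemma bern_step {r x : ℝ} (hr0 : 0 ≤ r) (hr1 : r ≤ 1) (hx : 1 ≤ x) :
    (x + 1) ^ r ≤ x ^ r + r * x ^ (r - 1) := by
  have hx0 : 0 < x := lt_of_lt_of_le one_pos hx
  have h1 : (1 + 1 / x) ^ r ≤ 1 + r * (1 / x) :=
    rpow_one_add_le_one_add_mul_self (by have := one_div_nonneg.mpr hx0.le; linarith) hr0 hr1
  have h2 : (x + 1) ^ r = x ^ r * (1 + 1 / x) ^ r := by
    rw [← Real.mul_rpow hx0.le (by positivity)]
    congr 1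
    field_simp
  rw [h2]
  calc x ^ r * (1 + 1 / x) ^ r ≤ x ^ r * (1 + r * (1 / x)) := by
        apply mul_le_mul_of_nonneg_left h1 (rpow_nonneg hx0.le r)
    _ = x ^ r + r * (x ^ r / x) := by ring
    _ = x ^ r + r * x ^ (r - 1) := by
        rw [Real.rpow_sub hx0, Real.rpow_one]

lemma psum_lb {r : ℝ} (hr0 : 0 ≤ r) (hr1 : r ≤ 1) (m : ℕ) :
    ((m : ℝ) + 1) ^ r - 1 ≤ r * ∑ k ∈ Finset.range m, ((k : ℝ) + 1) ^ (r - 1) := by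
  induction m with
  | zero => simp
  | succ m ih =>
    rw [Finset.sum_range_succ, mul_add]
    have hb := bern_step hr0 hr1 (x := (m : ℝ) + 1) (by have : (0:ℝ) ≤ m := Nat.cast_nonneg m; linarith)
    push_cast
    push_cast at ih
    nlinarith [ih, hb]

lemma hardy_fac {r x : ℝ} (hr0 : 0 < r) (hx0 : 0 < x) :
    (1 / x) * ((x ^ r - 1) / r) = (1 / r) * (x ^ (r - 1) * (1 - x ^ (-r))) := by
  have hy : x ^ (r - 1) = x ^ r / x := by rw [Real.rpow_sub hx0, Real.rpow_one]
  have hz : x ^ (-r) = (x ^ r)⁻¹ := Real.rpow_neg hx0.le r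
  have hxr0 : (0:ℝ) < x ^ r := Real.rpow_pos_of_pos hx0 r
  rw [hy, hz]
  field_simp

/-- **Sharpness of the constant in the discrete Hardy inequality.**
Sequences indexed by the positive integers are encoded as `a : ℕ → ℝ`, where `a n`
represents the term `a_{n+1}`. For every `C < (p/(p-1))^p` there is a nonnegative,
finitely supported sequence for which the Hardy quotient exceeds `C`. -/
theorem discrete_hardy_sharp (p : ℝ) (hp : 1 < p)
    (C : ℝ) (hC : C < (p / (p - 1)) ^ p) :
    ∃ a : ℕ → ℝ, (∀ n, 0 ≤ a n) ∧ (Function.support a).Finite ∧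
      C * ∑' n : ℕ, a n ^ p
        < ∑' n : ℕ, ((1 / ((n : ℝ) + 1)) * ∑ k ∈ Finset.range (n + 1), a k) ^ p := by
  have hp0 : 0 < p := lt_trans one_pos hp
  have hp1 : 0 < p - 1 := by linarith
  set r : ℝ := 1 - 1 / p with hr_def
  have hinvp : 0 < 1 / p := by positivity
  have hinvp1 : 1 / p < 1 := by rw [div_lt_one hp0]; exact hp
  have hr0 : 0 < r := by simp only [hr_def]; linarith
  have hr1 : r < 1 := by simp only [hr_def]; linarith
  set K : ℝ := (p / (p - 1)) ^ p with hK_def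
  have hKr : K = (1 / r) ^ p := by
    rw [hr_def]
    field_simp
    exact hK_def
  set C' : ℝ := (C + K) / 2 with hC'_def
  have hCC' : C < C' := by simp only [hC'_def]; linarith
  have hC'K : C' < K := by simp only [hC'_def]; linarith
  -- Step 1 : choose M
  have t1 : Tendsto (fun n : ℕ => ((n : ℝ) + 1)) atTop atTop :=
    tendsto_atTop_add_const_right _ 1 tendsto_natCast_atTop_atTop
  have t2 : Tendsto (fun n : ℕ => K * (1 - ((n : ℝ) + 1) ^ (-r)) ^ p) atTop (𝓝 K) := by
    have h0 : Tendsto (fun n : ℕ => ((n : ℝ) + 1) ^ (-r)) atTop (𝓝 0) :=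
      (tendsto_rpow_neg_atTop hr0).comp t1
    have h1 : Tendsto (fun n : ℕ => (1 - ((n : ℝ) + 1) ^ (-r)) ^ p) atTop (𝓝 1) := by
      have h2 := (tendsto_const_nhds (x := (1:ℝ)) (f := atTop (α := ℕ))).sub h0
      rw [sub_zero] at h2
      have h3 := h2.rpow_const (p := p) (Or.inl one_ne_zero)
      rwa [Real.one_rpow] at h3
    have := h1.const_mul K
    rwa [mul_one] at this
  obtain ⟨M, hM⟩ := eventually_atTop.mp (t2.eventually (eventually_gt_nhds hC'K))
  -- Step 2 : choose N
  set H : ℕ → ℝ := fun n => ∑ i ∈ Finset.range n, 1 / ((i : ℝ) + 1) with hH_def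
  have hHtendsto : Tendsto H atTop atTop := tendsto_sum_range_one_div_nat_succ_atTop
  have hd : 0 < C' - C := by linarith
  have hHtendsto2 : Tendsto (fun n => (C' - C) * H n) atTop atTop :=
    hHtendsto.const_mul_atTop hd
  obtain ⟨N, hN1, hN2⟩ :=
    ((hHtendsto2.eventually_ge_atTop (C' * H M + 1)).and (eventually_ge_atTop M)).exists
  -- the sequence
  set a : ℕ → ℝ := fun k => if k < N then ((k : ℝ) + 1) ^ (-(1 / p)) else 0 with ha_def
  have ha_nonneg : ∀ n, 0 ≤ a n := by
    intro n
    simp only [ha_def]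
    split
    · exact rpow_nonneg (by positivity) _
    · exact le_rfl
  have ha_supp : (Function.support a).Finite := by
    apply Set.Finite.subset (Finset.range N).finite_toSet
    intro n hn
    simp only [Function.mem_support, ha_def] at hn
    by_contra hcon
    simp only [Finset.coe_range, Set.mem_Iio, not_lt] at hcon
    exact hn (if_neg (by omega))
  refine ⟨a, ha_nonneg, ha_supp, ?_⟩
  -- LHS computation
  have hLHS : ∑' n : ℕ, a n ^ p = H N := by
    rw [tsum_eq_sum (s := Finset.range N) (by
      intro n hn
      simp only [Finset.mem_range, not_lt] at hn
      rw [ha_def]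
      simp only [if_neg (by omega : ¬ n < N)]
      exact Real.zero_rpow (ne_of_gt hp0))]
    apply Finset.sum_congr rfl
    intro k hk
    simp only [Finset.mem_range] at hk
    rw [ha_def]
    simp only [if_pos hk]
    rw [← Real.rpow_mul (by positivity : (0:ℝ) ≤ (k:ℝ)+1)]
    have hm : (-(1/p)) * p = -1 := by field_simp
    rw [hm, Real.rpow_neg_one, one_div]
  rw [hLHS]
  -- partial sums and their bounds
  set S : ℕ → ℝ := fun n => ∑ k ∈ Finset.range (n + 1), a k with hS_def
  set T : ℝ := ∑ k ∈ Finset.range N, a k with hT_def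
  have hS_nonneg : ∀ n, 0 ≤ S n := fun n => Finset.sum_nonneg fun k _ => ha_nonneg k
  have hS_ub : ∀ n, S n ≤ T := by
    intro n
    calc S n ≤ ∑ k ∈ Finset.range (n + 1 + N), a k := by
          apply Finset.sum_le_sum_of_subset_of_nonneg
            (Finset.range_subset_range.mpr (by omega)) (fun k _ _ => ha_nonneg k)
      _ = T := by
          symm
          apply Finset.sum_subset (Finset.range_subset_range.mpr (by omega))
          intro k _ hk
          simp only [Finset.mem_range, not_lt] at hk
          rw [ha_def]
          exact if_neg (by omega)
  have hS_lb : ∀ n, n < N → (((n : ℝ) + 1) ^ r - 1) / r ≤ S n := by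
    intro n hn
    have hsum_eq : S n = ∑ k ∈ Finset.range (n + 1), ((k : ℝ) + 1) ^ (r - 1) := by
      apply Finset.sum_congr rfl
      intro k hk
      simp only [Finset.mem_range] at hk
      rw [ha_def]
      simp only [if_pos (by omega : k < N)]
      congr 1
      rw [hr_def]; ring
    have hps := psum_lb hr0.le hr1.le (n + 1)
    rw [← hsum_eq] at hps
    have hmono : ((n : ℝ) + 1) ^ r ≤ ((n : ℝ) + 1 + 1) ^ r :=
      Real.rpow_le_rpow (by positivity) (by linarith) hr0.le
    rw [div_le_iff₀ hr0, mul_comm]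
    push_cast at hps
    linarith
  -- summability of the right-hand side
  set b : ℕ → ℝ := fun n => ((1 / ((n : ℝ) + 1)) * S n) ^ p with hb_def
  have hb_nonneg : ∀ n, 0 ≤ b n := by
    intro n
    apply Real.rpow_nonneg
    have := hS_nonneg n
    positivity
  have hb_ub : ∀ n, b n ≤ T ^ p * ((n : ℝ) + 1) ^ (-p) := by
    intro n
    have hx0 : (0:ℝ) < (n : ℝ) + 1 := by positivity
    have h1 : b n ≤ ((1 / ((n : ℝ) + 1)) * T) ^ p := by
      apply Real.rpow_le_rpow
      · have := hS_nonneg n; positivity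
      · exact mul_le_mul_of_nonneg_left (hS_ub n) (by positivity)
      · exact hp0.le
    have h2 : ((1 / ((n : ℝ) + 1)) * T) ^ p = T ^ p * ((n : ℝ) + 1) ^ (-p) := by
      rw [mul_comm, Real.mul_rpow (hS_nonneg 0 |>.trans (hS_ub 0)) (by positivity),
        one_div, ← Real.rpow_neg_one ((n:ℝ)+1), ← Real.rpow_mul hx0.le]
      norm_num
    rw [h2] at h1
    exact h1
  have hb_summable : Summable b := by
    apply Summable.of_nonneg_of_le hb_nonneg hb_ub
    apply Summable.mul_left
    have h1 : Summable (fun n : ℕ => ((n : ℝ)) ^ (-p)) :=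
      Real.summable_nat_rpow.mpr (by linarith)
    have h2 := (summable_nat_add_iff 1).mpr h1
    apply h2.congr
    intro n
    push_cast
    ring_nf
  -- key per-term lower bound
  have hkey : ∀ n, M ≤ n → n < N → C' / ((n : ℝ) + 1) ≤ b n := by
    intro n hMn hnN
    set x : ℝ := (n : ℝ) + 1 with hx_def
    have hx1 : 1 ≤ x := by simp only [hx_def]; have : (0:ℝ) ≤ n := Nat.cast_nonneg n; linarith
    have hx0 : 0 < x := lt_of_lt_of_le one_pos hx1
    have hxr1 : 1 ≤ x ^ r := by
      rw [← Real.one_rpow r]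
      exact Real.rpow_le_rpow zero_le_one hx1 hr0.le
    have hxr0 : 0 < x ^ r := lt_of_lt_of_le one_pos hxr1
    -- lower bound for b n
    have hblow : ((1 / x) * ((x ^ r - 1) / r)) ^ p ≤ b n := by
      apply Real.rpow_le_rpow
      · have h1 : 0 ≤ (x ^ r - 1) / r := div_nonneg (by linarith) hr0.le
        positivity
      · apply mul_le_mul_of_nonneg_left (hS_lb n hnN) (by positivity)
      · exact hp0.le
    have heq : ((1 / x) * ((x ^ r - 1) / r)) ^ p = K * (1 - x ^ (-r)) ^ p * (1 / x) := by
      have hfac : (1 / x) * ((x ^ r - 1) / r) = (1 / r) * (x ^ (r - 1) * (1 - x ^ (-r))) :=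
        hardy_fac hr0 hx0
      rw [hfac]
      have h1mx : 0 ≤ 1 - x ^ (-r) := by
        rw [Real.rpow_neg hx0.le]
        have : x ^ r ≥ 1 := hxr1
        have h2 : (x ^ r)⁻¹ ≤ 1 := by
          rw [inv_le_one_iff₀]; right; exact hxr1
        linarith
      rw [Real.mul_rpow (by positivity) (by positivity),
        Real.mul_rpow (Real.rpow_nonneg hx0.le _) h1mx,
        ← Real.rpow_mul hx0.le]
      have hexp : (r - 1) * p = -1 := by rw [hr_def]; field_simp; ring
      rw [hexp, Real.rpow_neg_one, hKr, one_div x]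
      ring
    have hKC' : C' ≤ K * (1 - x ^ (-r)) ^ p := (hM n hMn).le
    calc C' / x = C' * (1 / x) := by ring
      _ ≤ K * (1 - x ^ (-r)) ^ p * (1 / x) := by
          apply mul_le_mul_of_nonneg_right hKC' (by positivity)
      _ = ((1 / x) * ((x ^ r - 1) / r)) ^ p := heq.symm
      _ ≤ b n := hblow
  -- assemble
  have hfin : C' * (H N - H M) ≤ ∑' n : ℕ, b n := by
    have h1 : ∑ n ∈ Finset.Ico M N, C' / ((n : ℝ) + 1) ≤ ∑ n ∈ Finset.Ico M N, b n := by
      apply Finset.sum_le_sum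
      intro n hn
      simp only [Finset.mem_Ico] at hn
      exact hkey n hn.1 hn.2
    have h2 : ∑ n ∈ Finset.Ico M N, C' / ((n : ℝ) + 1) = C' * (H N - H M) := by
      rw [hH_def]
      simp only
      rw [← Finset.sum_Ico_eq_sub _ hN2, Finset.mul_sum]
      apply Finset.sum_congr rfl
      intro n _
      rw [div_eq_mul_one_div]
    have h3 : ∑ n ∈ Finset.Ico M N, b n ≤ ∑ n ∈ Finset.range N, b n := by
      rw [Finset.range_eq_Ico]
      exact Finset.sum_le_sum_of_subset_of_nonneg
        (Finset.Ico_subset_Ico (Nat.zero_le M) le_rfl) (fun k _ _ => hb_nonneg k)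
    have h4 : ∑ n ∈ Finset.range N, b n ≤ ∑' n : ℕ, b n :=
      Summable.sum_le_tsum _ (fun n _ => hb_nonneg n) hb_summable
    linarith
  have hHM_final : C * H N < C' * (H N - H M) := by nlinarith [hN1]
  calc C * H N < C' * (H N - H M) := hHM_final
    _ ≤ ∑' n : ℕ, b n := hfin
    _ = ∑' n : ℕ, ((1 / ((n : ℝ) + 1)) * ∑ k ∈ Finset.range (n + 1), a k) ^ p := by rfl
end

section
/- Let 1 < p < ∞ be real and let a : ℕ → ℝ be a nonnegative sequence indexed by the positive integers with ∑_{n=1}^∞ a_n^p < ∞. If equality holds in the discrete Hardy inequality, i.e. ∑_{n=1}^∞ ((1/n) ∑_{k=1}^n a_k)^p = (p/(p-1))^p ∑_{n=1}^∞ a_n^p, then a_n = 0 for all n. -/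
open Finset Real

/-- Strict Young inequality when `x ^ p ≠ y ^ q`. -/
lemma young_strict {p q x y : ℝ} (hpq : p.HolderConjugate q)
    (hx : 0 ≤ x) (hy : 0 ≤ y) (hne : x ^ p ≠ y ^ q) :
    x * y < x ^ p / p + y ^ q / q := by
  have hp := hpq.pos
  have hq := hpq.symm.pos
  rcases hx.eq_or_lt with hx0 | hx0
  · have hxp : x ^ p = 0 := by rw [← hx0, Real.zero_rpow hp.ne']
    have hyq : 0 < y ^ q := (Real.rpow_nonneg hy q).lt_of_ne (by
      intro h; exact hne (hxp.trans h))
    rw [← hx0, zero_mul, Real.zero_rpow hp.ne', zero_div, zero_add]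
    positivity
  rcases hy.eq_or_lt with hy0 | hy0
  · have hyq : y ^ q = 0 := by rw [← hy0, Real.zero_rpow hq.ne']
    have hxp : 0 < x ^ p := Real.rpow_pos_of_pos hx0 p
    rw [← hy0, mul_zero, Real.zero_rpow hq.ne', zero_div, add_zero]
    positivity
  · have hAB : Real.log x * p ≠ Real.log y * q := by
      intro h
      apply hne
      rw [Real.rpow_def_of_pos hx0, Real.rpow_def_of_pos hy0, h]
    have hc := strictConvexOn_exp.2 (Set.mem_univ (Real.log x * p))
      (Set.mem_univ (Real.log y * q)) hAB
      (by positivity : (0:ℝ) < p⁻¹) (by positivity : (0:ℝ) < q⁻¹)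
      hpq.inv_add_inv_eq_one
    simp only [smul_eq_mul] at hc
    have e1 : p⁻¹ * (Real.log x * p) + q⁻¹ * (Real.log y * q) = Real.log x + Real.log y := by
      field_simp
    rw [e1] at hc
    calc x * y = Real.exp (Real.log x + Real.log y) := by
          rw [Real.exp_add, Real.exp_log hx0, Real.exp_log hy0]
      _ < p⁻¹ * Real.exp (Real.log x * p) + q⁻¹ * Real.exp (Real.log y * q) := hc
      _ = x ^ p / p + y ^ q / q := by
          rw [← Real.rpow_def_of_pos hx0, ← Real.rpow_def_of_pos hy0]; ring

lemma key_alg {p x X Y Z c : ℝ} {y : ℝ} (hp : 1 < p) (hY : y * Z = Y) (hY0 : 0 ≤ Y)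
    (hc : 0 ≤ c) (hyoung : x * Z ≤ X / p + Y * (p - 1) / p) :
    Y ≤ p / (p - 1) * ((((c + 1) * y - c * x)) * Z) + (c * X - (c + 1) * Y) / (p - 1) := by
  have h1 : (0:ℝ) < p - 1 := by linarith
  have h0 : (0:ℝ) < p := by linarith
  have e : p / (p - 1) * ((((c + 1) * y - c * x)) * Z) + (c * X - (c + 1) * Y) / (p - 1)
      = (p * (((c + 1) * y - c * x) * Z) + (c * X - (c + 1) * Y)) / (p - 1) := by
    field_simp
  rw [e, le_div_iff₀ h1]
  have h3 : c * p * (x * Z) ≤ c * X + c * (p - 1) * Y := by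
    have h2 := mul_le_mul_of_nonneg_left hyoung (mul_nonneg hc h0.le)
    calc c * p * (x * Z) = c * p * (x * Z) := rfl
      _ ≤ c * p * (X / p + Y * (p - 1) / p) := h2
      _ = c * X + c * (p - 1) * Y := by field_simp
  have hY2 : p * c * (y * Z) = p * c * Y := by rw [hY]
  have hY3 : p * (y * Z) = p * Y := by rw [hY]
  nlinarith [h3, hY2, hY3]

lemma key_alg_strict {p x X Y Z c : ℝ} {y : ℝ} (hp : 1 < p) (hY : y * Z = Y) (hY0 : 0 ≤ Y)
    (hc : 0 < c) (hyoung : x * Z < X / p + Y * (p - 1) / p) :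
    Y < p / (p - 1) * ((((c + 1) * y - c * x)) * Z) + (c * X - (c + 1) * Y) / (p - 1) := by
  have h1 : (0:ℝ) < p - 1 := by linarith
  have h0 : (0:ℝ) < p := by linarith
  have e : p / (p - 1) * ((((c + 1) * y - c * x)) * Z) + (c * X - (c + 1) * Y) / (p - 1)
      = (p * (((c + 1) * y - c * x) * Z) + (c * X - (c + 1) * Y)) / (p - 1) := by
    field_simp
  rw [e, lt_div_iff₀ h1]
  have h3 : c * p * (x * Z) < c * X + c * (p - 1) * Y := by
    have h2 := mul_lt_mul_of_pos_left hyoung (mul_pos hc h0)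
    calc c * p * (x * Z) < c * p * (X / p + Y * (p - 1) / p) := h2
      _ = c * X + c * (p - 1) * Y := by field_simp
  have hY2 : p * c * (y * Z) = p * c * Y := by rw [hY]
  have hY3 : p * (y * Z) = p * Y := by rw [hY]
  nlinarith [h3, hY2, hY3]

/-- **Equality case of the discrete Hardy inequality.**
Sequences indexed by the positive integers are encoded as `a : ℕ → ℝ`, where `a n`
represents the term `a_{n+1}`. If `a` is nonnegative with summable `p`-th powers and
equality holds in the discrete Hardy inequality, then `a` vanishes identically. -/
theorem discrete_hardy_equality_case (p : ℝ) (hp : 1 < p)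
    (a : ℕ → ℝ) (ha : ∀ n, 0 ≤ a n)
    (hsum : Summable fun n : ℕ => a n ^ p)
    (heq : ∑' n : ℕ, ((1 / ((n : ℝ) + 1)) * ∑ k ∈ Finset.range (n + 1), a k) ^ p
      = (p / (p - 1)) ^ p * ∑' n : ℕ, a n ^ p) :
    ∀ n, a n = 0 := by
  by_contra hcon
  push_neg at hcon
  obtain ⟨m, hm⟩ := hcon
  have ham : 0 < a m := (ha m).lt_of_ne (Ne.symm hm)
  have hp0 : (0:ℝ) < p := by linarith
  have hp1 : (0:ℝ) < p - 1 := by linarith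
  set q : ℝ := p / (p - 1) with hqdef
  have hpq : p.HolderConjugate q := (Real.holderConjugate_iff_eq_conjExponent hp).mpr hqdef
  have hq0 : 0 < q := hpq.symm.pos
  set T : ℝ := ∑' n : ℕ, a n ^ p with hTdef
  have hT : 0 < T :=
    Summable.tsum_pos hsum (fun n => Real.rpow_nonneg (ha n) p) m (Real.rpow_pos_of_pos ham p)
  set A : ℕ → ℝ := fun n => (1 / ((n : ℝ) + 1)) * ∑ k ∈ Finset.range (n + 1), a k with hAdef
  have heqA : ∑' n : ℕ, A n ^ p = q ^ p * T := by simpa only [hAdef] using heq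
  have hA0 : ∀ n, 0 ≤ A n := by
    intro n
    simp only [hAdef]
    exact mul_nonneg (by positivity) (Finset.sum_nonneg fun k _ => ha k)
  have h1 : ∀ n : ℕ, ((n:ℝ) + 1) * A n = ∑ k ∈ Finset.range (n + 1), a k := by
    intro n
    simp only [hAdef]
    have : ((n:ℝ) + 1) ≠ 0 := by positivity
    field_simp
  have hA0a : A 0 = a 0 := by
    have h10 := h1 0
    simp [Finset.sum_range_one] at h10
    simpa using h10
  by_cases hAs : Summable (fun n : ℕ => A n ^ p)
  swap
  · rw [tsum_eq_zero_of_not_summable hAs] at heqA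
    have := mul_pos (Real.rpow_pos_of_pos hq0 p) hT
    linarith
  have hAm : 0 < A m := by
    have h2 : 0 < ∑ k ∈ Finset.range (m + 1), a k :=
      lt_of_lt_of_le ham (Finset.single_le_sum (fun k _ => ha k) (Finset.mem_range.2 (Nat.lt_succ_self m)))
    simp only [hAdef]
    exact mul_pos (by positivity) h2
  by_cases hconst : ∀ n : ℕ, A (n + 1) = A n
  · have hAeq : ∀ n, A n = A 0 := by
      intro n
      induction n with
      | zero => rfl
      | succ k ih => rw [hconst k, ih]
    have hsc : Summable (fun _ : ℕ => A 0 ^ p) :=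
      hAs.congr (fun n => by rw [hAeq n])
    have hz : A 0 ^ p = 0 := by
      have ht := hsc.tendsto_atTop_zero
      exact tendsto_nhds_unique tendsto_const_nhds ht
    have : 0 < A 0 := by rw [← hAeq m]; exact hAm
    have := Real.rpow_pos_of_pos this p
    linarith
  push_neg at hconst
  obtain ⟨j, hj⟩ := hconst
  -- setup
  set S : ℝ := ∑' n : ℕ, A n ^ p with hSdef
  have hS0 : 0 < S := by rw [heqA]; exact mul_pos (Real.rpow_pos_of_pos hq0 p) hT
  set g : ℕ → ℝ := fun n => (n : ℝ) * A (n - 1) ^ p with hgdef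
  have hg0 : g 0 = 0 := by simp [hgdef]
  have hgsucc : ∀ n : ℕ, g (n + 1) = ((n:ℝ) + 1) * A n ^ p := by
    intro n
    simp only [hgdef, Nat.add_sub_cancel]
    push_cast
    ring
  have hgnonneg : ∀ n, 0 ≤ g n := fun n =>
    mul_nonneg (Nat.cast_nonneg n) (Real.rpow_nonneg (hA0 _) p)
  set R : ℕ → ℝ := fun n => q * (a n * A n ^ (p - 1)) + (g n - g (n + 1)) / (p - 1) with hRdef
  have selfmul : ∀ x : ℝ, 0 ≤ x → x * x ^ (p - 1) = x ^ p := by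
    intro x hx
    rcases hx.eq_or_lt with h | h
    · simp [← h, Real.zero_rpow (show p ≠ 0 by linarith)]
    · have h2 := Real.rpow_add h 1 (p - 1)
      rw [show (1:ℝ) + (p - 1) = p by ring, Real.rpow_one] at h2
      exact h2.symm
  have hZq : ∀ n : ℕ, (A n ^ (p - 1)) ^ q = A n ^ p := by
    intro n
    rw [← Real.rpow_mul (hA0 n)]
    congr 1
    rw [hqdef]
    field_simp
  have hdivq : ∀ Y : ℝ, Y / q = Y * (p - 1) / p := by
    intro Y
    rw [hqdef]
    rw [div_div_eq_mul_div]
  have ha' : ∀ n : ℕ, a (n + 1) = (((n:ℝ) + 1) + 1) * A (n + 1) - ((n:ℝ) + 1) * A n := by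
    intro n
    have e1 := h1 (n + 1)
    have e2 := h1 n
    rw [Finset.sum_range_succ] at e1
    push_cast at e1 ⊢
    linarith
  have key : ∀ n, A n ^ p ≤ R n := by
    intro n
    simp only [hRdef]
    cases n with
    | zero =>
      rw [hg0, hgsucc 0, hA0a]
      rw [show q * (a 0 * a 0 ^ (p - 1)) = q * a 0 ^ p by rw [selfmul (a 0) (ha 0)]]
      rw [hqdef]
      push_cast
      have : p / (p - 1) * a 0 ^ p + (0 - (0 + 1) * a 0 ^ p) / (p - 1) = a 0 ^ p := by
        field_simp
        ring
      linarith
    | succ n =>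
      rw [hgsucc n, hgsucc (n + 1), ha' n]
      have yng := Real.young_inequality_of_nonneg (hA0 n)
        (Real.rpow_nonneg (hA0 (n + 1)) (p - 1)) hpq
      rw [hZq (n + 1), hdivq (A (n + 1) ^ p)] at yng
      have hk := key_alg (x := A n) (y := A (n + 1)) (X := A n ^ p) (Y := A (n + 1) ^ p)
        (Z := A (n + 1) ^ (p - 1)) (c := (n : ℝ) + 1) hp
        (selfmul (A (n + 1)) (hA0 (n + 1))) (Real.rpow_nonneg (hA0 (n + 1)) p)
        (by positivity) yng
      rw [hqdef]
      push_cast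
      linarith [hk]
  have keyS : A (j + 1) ^ p < R (j + 1) := by
    simp only [hRdef]
    rw [hgsucc j, hgsucc (j + 1), ha' j]
    have hne : A j ^ p ≠ (A (j + 1) ^ (p - 1)) ^ q := by
      rw [hZq (j + 1)]
      intro h
      apply hj
      rcases lt_trichotomy (A j) (A (j + 1)) with hlt | heqq | hlt
      · exact absurd h (ne_of_lt (Real.rpow_lt_rpow (hA0 j) hlt hp0))
      · exact heqq.symm
      · exact absurd h.symm (ne_of_lt (Real.rpow_lt_rpow (hA0 (j + 1)) hlt hp0))
    have yng := young_strict hpq (hA0 j) (Real.rpow_nonneg (hA0 (j + 1)) (p - 1)) hne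
    rw [hZq (j + 1), hdivq (A (j + 1) ^ p)] at yng
    have hk := key_alg_strict (x := A j) (y := A (j + 1)) (X := A j ^ p) (Y := A (j + 1) ^ p)
      (Z := A (j + 1) ^ (p - 1)) (c := (j : ℝ) + 1) hp
      (selfmul (A (j + 1)) (hA0 (j + 1))) (Real.rpow_nonneg (hA0 (j + 1)) p)
      (by positivity) yng
    rw [hqdef]
    push_cast
    linarith [hk]
  set ε : ℝ := R (j + 1) - A (j + 1) ^ p with hεdef
  have hεpos : 0 < ε := sub_pos.2 keyS
  have sumR : ∀ N : ℕ, ∑ n ∈ Finset.range N, R n ≤ q * ∑ n ∈ Finset.range N, (a n * A n ^ (p - 1)) := by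
    intro N
    simp only [hRdef]
    rw [Finset.sum_add_distrib, ← Finset.mul_sum, ← Finset.sum_div, Finset.sum_range_sub' g, hg0]
    have h2 : (0 - g N) / (p - 1) ≤ 0 :=
      div_nonpos_of_nonpos_of_nonneg (by linarith [hgnonneg N]) hp1.le
    linarith
  have slack : ∀ N : ℕ, j + 1 < N →
      ∑ n ∈ Finset.range N, A n ^ p + ε ≤ q * ∑ n ∈ Finset.range N, (a n * A n ^ (p - 1)) := by
    intro N hN
    have hsingle := Finset.single_le_sum (f := fun n => R n - A n ^ p)
      (fun i _ => sub_nonneg.2 (key i)) (Finset.mem_range.2 hN)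
    rw [Finset.sum_sub_distrib] at hsingle
    have := sumR N
    linarith
  have holder : ∀ N : ℕ, ∑ n ∈ Finset.range N, (a n * A n ^ (p - 1))
      ≤ T ^ (1 / p) * S ^ (1 / q) := by
    intro N
    have h := Real.inner_le_Lp_mul_Lq_of_nonneg (s := Finset.range N) (f := a)
      (g := fun n => A n ^ (p - 1)) hpq (fun i _ => ha i)
      (fun i _ => Real.rpow_nonneg (hA0 i) _)
    rw [show (∑ i ∈ Finset.range N, ((fun n => A n ^ (p - 1)) i) ^ q)
        = ∑ i ∈ Finset.range N, A i ^ p from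
      Finset.sum_congr rfl (fun i _ => hZq i)] at h
    refine h.trans (mul_le_mul ?_ ?_ ?_ ?_)
    · exact Real.rpow_le_rpow (Finset.sum_nonneg fun i _ => Real.rpow_nonneg (ha i) p)
        (Summable.sum_le_tsum _ (fun i _ => Real.rpow_nonneg (ha i) p) hsum) (by positivity)
    · exact Real.rpow_le_rpow (Finset.sum_nonneg fun i _ => Real.rpow_nonneg (hA0 i) p)
        (Summable.sum_le_tsum _ (fun i _ => Real.rpow_nonneg (hA0 i) p) hAs) (by positivity)
    · exact Real.rpow_nonneg (Finset.sum_nonneg fun i _ => Real.rpow_nonneg (hA0 i) p) _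
    · exact Real.rpow_nonneg hT.le _
  have hlim : S ≤ q * (T ^ (1 / p) * S ^ (1 / q)) - ε := by
    have htend : Filter.Tendsto (fun N => ∑ n ∈ Finset.range N, A n ^ p)
        Filter.atTop (nhds S) := hAs.hasSum.tendsto_sum_nat
    refine le_of_tendsto htend ?_
    filter_upwards [Filter.eventually_gt_atTop (j + 1)] with N hN
    have h2 := mul_le_mul_of_nonneg_left (holder N) hq0.le
    linarith [slack N hN]
  have hfinal : q * (T ^ (1 / p) * S ^ (1 / q)) = S := by
    have hqp : (0:ℝ) < q ^ p := Real.rpow_pos_of_pos hq0 p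
    have hTS : T = S / q ^ p := by rw [heqA]; field_simp
    rw [hTS, Real.div_rpow hS0.le hqp.le]
    rw [show (q ^ p) ^ (1 / p) = q by
      rw [← Real.rpow_mul hq0.le, mul_one_div, div_self hp0.ne', Real.rpow_one]]
    rw [show q * (S ^ (1 / p) / q * S ^ (1 / q)) = S ^ (1 / p) * S ^ (1 / q) by
      field_simp]
    rw [← Real.rpow_add hS0]
    rw [show 1 / p + 1 / q = 1 by
      rw [one_div, one_div]; exact hpq.inv_add_inv_eq_one]
    exact Real.rpow_one S
  rw [hfinal] at hlim
  linarith
end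

section
/- Let 1 ≤ p < ∞ be real, let ψ : ℕ → ℝ be finitely supported, and let ψ̃ be a non-increasing rearrangement of |ψ| (a non-increasing sequence equal to |ψ| after composing with a bijection of ℕ). Let w : ℕ → ℝ be a strictly positive non-decreasing function such that m·w(n) ≤ n·w(m) whenever n ≤ m. Then for every positive integer n, sup_{1 ≤ m < ∞} | min{1/w(n), 1/w(m)} · ∑_{k=1}^m ψ(k) |^p ≤ ( (1/w(n)) ∑_{k=1}^n ψ̃(k) )^p. -/
private lemma fin_le_strictMono {k : ℕ} (g : Fin k → ℕ) (hg : StrictMono g) :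
    ∀ i : Fin k, (i : ℕ) ≤ g i := by
  have H : ∀ n (i : Fin k), (i : ℕ) = n → n ≤ g i := by
    intro n
    induction n with
    | zero => intro i _; exact Nat.zero_le _
    | succ m ih =>
      intro i hi
      have hm : m < k := by omega
      have h1 := ih ⟨m, hm⟩ rfl
      have h2 : g ⟨m, hm⟩ < g i := hg (by simp [Fin.lt_def]; omega)
      omega
  exact fun i => H (i : ℕ) i rfl

private lemma sum_le_sum_range_card (f : ℕ → ℝ) (hf : Antitone f) (s : Finset ℕ) :
    ∑ i ∈ s, f i ≤ ∑ i ∈ Finset.range s.card, f i := by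
  classical
  have h1 : ∑ i ∈ s, f i = ∑ i : Fin s.card, f (s.orderEmbOfFin rfl i) := by
    rw [← Finset.sum_attach s f]
    exact (Fintype.sum_equiv (s.orderIsoOfFin rfl).toEquiv _ _ (by
      intro i
      rw [← Finset.coe_orderIsoOfFin_apply]
      rfl)).symm
  rw [h1, Finset.sum_range fun i => f i]
  apply Finset.sum_le_sum
  intro i _
  exact hf (fin_le_strictMono _ (s.orderEmbOfFin rfl).strictMono i)

/-- **Key pointwise estimate (Proposition, weighted version).**
Sequences indexed by the positive integers are encoded as functions on `ℕ`, where
index `n : ℕ` represents the positive integer `n + 1`; thus `w n` is `w(n+1)`, the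
bijection `σ : ℕ → ℕ` encodes a bijection of the positive integers, the condition
`m·w(n) ≤ n·w(m)` for `n ≤ m` becomes `(m+1)·w n ≤ (n+1)·w m`, and
`Finset.range (m+1)` encodes `{1, …, m+1}`. `ψt` is a non-increasing rearrangement
of `|ψ|`. The supremum is over all positive integers `m`. -/
theorem key_weighted_sup_estimate (p : ℝ) (hp : 1 ≤ p)
    (ψ ψt : ℕ → ℝ) (hψ : (Function.support ψ).Finite)
    (hmono : ∀ n, ψt (n + 1) ≤ ψt n)
    (σ : ℕ → ℕ) (hσ : Function.Bijective σ) (hperm : ∀ n, ψt n = |ψ (σ n)|)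
    (w : ℕ → ℝ) (hw_pos : ∀ n, 0 < w n) (hw_mono : Monotone w)
    (hw : ∀ n m : ℕ, n ≤ m → ((m : ℝ) + 1) * w n ≤ ((n : ℝ) + 1) * w m)
    (n : ℕ) :
    (⨆ m : ℕ, |min (1 / w n) (1 / w m) * ∑ k ∈ Finset.range (m + 1), ψ k| ^ p)
      ≤ ((1 / w n) * ∑ k ∈ Finset.range (n + 1), ψt k) ^ p := by
  classical
  have hψt0 : ∀ k, 0 ≤ ψt k := fun k => (hperm k) ▸ abs_nonneg _
  have hanti : Antitone ψt := antitone_nat_of_succ_le hmono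
  set S : ℕ → ℝ := fun m => ∑ k ∈ Finset.range (m + 1), ψt k with hS
  have hS0 : ∀ m, 0 ≤ S m := fun m => Finset.sum_nonneg fun k _ => hψt0 k
  -- Step 1: |∑ ψ| ≤ S m
  have step1 : ∀ m, |∑ k ∈ Finset.range (m + 1), ψ k| ≤ S m := by
    intro m
    set e := Equiv.ofBijective σ hσ with he
    calc |∑ k ∈ Finset.range (m + 1), ψ k|
        ≤ ∑ k ∈ Finset.range (m + 1), |ψ k| := Finset.abs_sum_le_sum_abs _ _
      _ = ∑ k ∈ Finset.range (m + 1), ψt (e.symm k) := by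
          apply Finset.sum_congr rfl
          intro k _
          rw [hperm]
          congr 1
          exact congrArg ψ (e.apply_symm_apply k).symm
      _ = ∑ j ∈ (Finset.range (m + 1)).image e.symm, ψt j := by
          rw [Finset.sum_image (fun a _ b _ h => e.symm.injective h)]
      _ ≤ ∑ j ∈ Finset.range ((Finset.range (m + 1)).image e.symm).card, ψt j :=
          sum_le_sum_range_card ψt hanti _
      _ = S m := by
          rw [Finset.card_image_of_injective _ e.symm.injective, Finset.card_range]
  -- basic: (n+1) * ψt n ≤ S n
  have hbase : ∀ m : ℕ, ((m : ℝ) + 1) * ψt m ≤ S m := by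
    intro m
    have := Finset.card_nsmul_le_sum (Finset.range (m + 1)) ψt (ψt m)
      (fun i hi => hanti (by simpa using Nat.lt_succ_iff.mp (Finset.mem_range.mp hi)))
    simpa [nsmul_eq_mul, add_comm] using this
  -- Step 2: (n+1) S m ≤ (m+1) S n for n ≤ m
  have step2 : ∀ m : ℕ, n ≤ m → ((n : ℝ) + 1) * S m ≤ ((m : ℝ) + 1) * S n := by
    intro m hnm
    have hsplit : S m = S n + ∑ k ∈ Finset.Ico (n + 1) (m + 1), ψt k := by
      rw [hS]
      simp only
      rw [Finset.range_eq_Ico, ← Finset.sum_Ico_consecutive _ (Nat.zero_le _)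
        (Nat.succ_le_succ hnm), ← Finset.range_eq_Ico]
    have htail : ∑ k ∈ Finset.Ico (n + 1) (m + 1), ψt k ≤ ((m : ℝ) - n) * ψt n := by
      have := Finset.sum_le_card_nsmul (Finset.Ico (n + 1) (m + 1)) ψt (ψt n)
        (fun i hi => hanti (le_of_lt (Finset.mem_Ico.mp hi).1))
      rw [Nat.card_Ico] at this
      have hcast : ((m + 1 - (n + 1) : ℕ) : ℝ) = (m : ℝ) - n := by
        rw [Nat.succ_sub_succ, Nat.cast_sub hnm]
      calc ∑ k ∈ Finset.Ico (n + 1) (m + 1), ψt k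
          ≤ ((m + 1 - (n + 1) : ℕ) : ℝ) * ψt n := by
            simpa [nsmul_eq_mul] using this
        _ = ((m : ℝ) - n) * ψt n := by rw [hcast]
    have hbn := hbase n
    have hmn : (n : ℝ) ≤ m := by exact_mod_cast hnm
    nlinarith [hψt0 n, hS0 n]
  -- per-m bound
  have key : ∀ m, |min (1 / w n) (1 / w m) * ∑ k ∈ Finset.range (m + 1), ψ k|
      ≤ (1 / w n) * S n := by
    intro m
    have hwn := hw_pos n
    have hwm := hw_pos m
    have hminpos : 0 < min (1 / w n) (1 / w m) :=
      lt_min (by positivity) (by positivity)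
    rw [abs_mul, abs_of_pos hminpos]
    rcases le_total m n with hmn | hnm
    · have hmin : min (1 / w n) (1 / w m) ≤ 1 / w n := min_le_left _ _
      have hSmn : S m ≤ S n := Finset.sum_le_sum_of_subset_of_nonneg
        (Finset.range_subset_range.mpr (Nat.succ_le_succ hmn)) (fun i _ _ => hψt0 i)
      calc min (1 / w n) (1 / w m) * |∑ k ∈ Finset.range (m + 1), ψ k|
          ≤ (1 / w n) * S m := by
            apply mul_le_mul hmin (step1 m) (abs_nonneg _) (by positivity)
        _ ≤ (1 / w n) * S n := by
            apply mul_le_mul_of_nonneg_left hSmn (by positivity)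
    · have hmin : min (1 / w n) (1 / w m) ≤ 1 / w m := min_le_right _ _
      have h2 := step2 m hnm
      have h3 := hw n m hnm
      have hgoal : (1 / w m) * S m ≤ (1 / w n) * S n := by
        rw [div_mul_eq_mul_div, div_mul_eq_mul_div, div_le_div_iff₀ hwm hwn]
        have hnpos : (0 : ℝ) < (n : ℝ) + 1 := by positivity
        have hmpos : (0 : ℝ) < (m : ℝ) + 1 := by positivity
        have hprod : (((n : ℝ) + 1) * S m) * (((m : ℝ) + 1) * w n)
            ≤ (((m : ℝ) + 1) * S n) * (((n : ℝ) + 1) * w m) :=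
          mul_le_mul h2 h3 (by positivity) (mul_nonneg hmpos.le (hS0 n))
        nlinarith [hS0 n, hS0 m]
      calc min (1 / w n) (1 / w m) * |∑ k ∈ Finset.range (m + 1), ψ k|
          ≤ (1 / w m) * S m :=
            mul_le_mul hmin (step1 m) (abs_nonneg _) (by positivity)
        _ ≤ (1 / w n) * S n := hgoal
  -- conclude via rpow monotonicity and ciSup_le
  apply ciSup_le
  intro m
  exact Real.rpow_le_rpow (abs_nonneg _) (key m) (le_trans zero_le_one hp)
end

section
/- Let 1 < p < ∞ be real and let ψ : ℕ → ℝ be a finitely supported sequence indexed by the positive integers. Then ∑_{n=1}^∞ sup_{1 ≤ m < ∞} | min{1/n, 1/m} · ∑_{k=1}^m ψ(k) |^p ≤ (p/(p-1))^p ∑_{n=1}^∞ |ψ(n)|^p. -/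
open Finset

namespace ImprovedHardy

lemma self_mul_rpow {p h : ℝ} (hp : 1 < p) (hh : 0 ≤ h) : h * h ^ (p - 1) = h ^ p := by
  rcases eq_or_lt_of_le hh with h0 | h0
  · rw [← h0, Real.zero_rpow (by linarith), Real.zero_rpow (by linarith), mul_zero]
  · rw [show p = 1 + (p - 1) by ring, Real.rpow_add h0, Real.rpow_one]
    norm_num

lemma rpow_conj {p y : ℝ} (hp : 1 < p) (hy : 0 ≤ y) :
    (y ^ (p - 1)) ^ (p / (p - 1)) = y ^ p := by
  rw [← Real.rpow_mul hy]
  congr 1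
  have h1 : p - 1 ≠ 0 := ne_of_gt (by linarith)
  field_simp

lemma young_aux {p : ℝ} (hp : 1 < p) {x y : ℝ} (hx : 0 ≤ x) (hy : 0 ≤ y) :
    p * (x * y ^ (p - 1)) ≤ x ^ p + (p - 1) * y ^ p := by
  have hpq : Real.HolderConjugate p (p / (p - 1)) := Real.HolderConjugate.conjExponent hp
  have h := Real.young_inequality x (y ^ (p - 1)) hpq
  rw [abs_of_nonneg hx, abs_of_nonneg (Real.rpow_nonneg hy _), rpow_conj hp hy] at h
  have hppos : (0 : ℝ) < p := by linarith
  have h2 := mul_le_mul_of_nonneg_left h (le_of_lt hppos)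
  calc p * (x * y ^ (p - 1)) ≤ p * (x ^ p / p + y ^ p / (p / (p - 1))) := h2
    _ = x ^ p + (p - 1) * y ^ p := by
        field_simp

lemma hardy_step {p : ℝ} (hp : 1 < p) (a : ℕ → ℝ) (ha : ∀ k, 0 ≤ a k) (n : ℕ) :
    (p - 1) * ((∑ k ∈ range (n+1), a k) / ((n:ℝ)+1)) ^ p ≤
      p * (a n * ((∑ k ∈ range (n+1), a k) / ((n:ℝ)+1)) ^ (p - 1))
      + ((∑ k ∈ range n, a k) ^ p / ((n:ℝ)) ^ (p-1)
         - (∑ k ∈ range (n+1), a k) ^ p / ((n:ℝ)+1) ^ (p-1)) := by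
  have hppos : (0 : ℝ) < p := by linarith
  set An : ℝ := ∑ k ∈ range n, a k with hAn
  set A1 : ℝ := ∑ k ∈ range (n+1), a k with hA1
  have hAnn : 0 ≤ An := sum_nonneg fun k _ => ha k
  have hA1n : 0 ≤ A1 := sum_nonneg fun k _ => ha k
  have hsucc : A1 = An + a n := by rw [hAn, hA1, sum_range_succ]
  have hn1 : (0:ℝ) < (n:ℝ) + 1 := by positivity
  set H : ℝ := A1 / ((n:ℝ)+1) with hH
  have hHn : 0 ≤ H := div_nonneg hA1n (le_of_lt hn1)
  -- D (n+1) = (n+1) * H^p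
  have hD1 : A1 ^ p / ((n:ℝ)+1) ^ (p-1) = ((n:ℝ)+1) * H ^ p := by
    rw [hH, Real.div_rpow hA1n (le_of_lt hn1)]
    rw [show ((n:ℝ)+1) ^ p = ((n:ℝ)+1) ^ (p-1) * ((n:ℝ)+1) by
      rw [← Real.rpow_add_one (ne_of_gt hn1)]; ring_nf]
    have : ((n:ℝ)+1) ^ (p-1) ≠ 0 := ne_of_gt (Real.rpow_pos_of_pos hn1 _)
    field_simp
  -- A1 * H^(p-1) = (n+1) * H^p
  have hA1H : A1 * H ^ (p-1) = ((n:ℝ)+1) * H ^ p := by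
    have : A1 = ((n:ℝ)+1) * H := by rw [hH]; field_simp
    rw [this, mul_assoc, self_mul_rpow hp hHn]
  -- key : p * An * H^(p-1) ≤ n*(p-1)*H^p + An^p / n^(p-1)
  have key : p * (An * H ^ (p-1)) ≤ (n:ℝ) * (p-1) * H ^ p + An ^ p / ((n:ℝ)) ^ (p-1) := by
    rcases Nat.eq_zero_or_pos n with h0 | h0
    · subst h0
      simp only [range_zero, sum_empty, Nat.cast_zero] at hAn ⊢
      rw [hAn, Real.zero_rpow (ne_of_gt hppos), zero_div]
      simp
    · have hnpos : (0:ℝ) < (n:ℝ) := by exact_mod_cast h0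
      set x : ℝ := An / (n:ℝ) with hx
      have hxn : 0 ≤ x := div_nonneg hAnn (le_of_lt hnpos)
      have hAx : An = (n:ℝ) * x := by rw [hx]; field_simp
      have hDn : An ^ p / ((n:ℝ)) ^ (p-1) = (n:ℝ) * x ^ p := by
        rw [hAx, Real.mul_rpow (le_of_lt hnpos) hxn]
        rw [show ((n:ℝ)) ^ p = ((n:ℝ)) ^ (p-1) * (n:ℝ) by
          rw [← Real.rpow_add_one (ne_of_gt hnpos)]; ring_nf]
        have : ((n:ℝ)) ^ (p-1) ≠ 0 := ne_of_gt (Real.rpow_pos_of_pos hnpos _)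
        field_simp
      rw [hDn, hAx]
      have := young_aux hp hxn hHn
      nlinarith [this, le_of_lt hnpos]
  have expand : p * (a n * H ^ (p-1)) = p * ((n:ℝ)+1) * H ^ p - p * (An * H ^ (p-1)) := by
    have : a n = A1 - An := by rw [hsucc]; ring
    rw [this, sub_mul, mul_sub, hA1H]; ring
  rw [hD1, expand]
  linarith [key]

lemma hardy_finite {p : ℝ} (hp : 1 < p) (a : ℕ → ℝ) (ha : ∀ k, 0 ≤ a k) (M : ℕ) :
    ∑ n ∈ range M, ((∑ k ∈ range (n+1), a k) / ((n:ℝ)+1)) ^ p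
      ≤ (p/(p-1))^p * ∑ n ∈ range M, a n ^ p := by
  have hppos : (0 : ℝ) < p := by linarith
  have hp1 : (0 : ℝ) < p - 1 := by linarith
  set H : ℕ → ℝ := fun n => (∑ k ∈ range (n+1), a k) / ((n:ℝ)+1) with hHdef
  have hHn : ∀ n, 0 ≤ H n := fun n =>
    div_nonneg (sum_nonneg fun k _ => ha k) (by positivity)
  set D : ℕ → ℝ := fun n => (∑ k ∈ range n, a k) ^ p / ((n:ℝ)) ^ (p-1) with hDdef
  have hsum1 : (p - 1) * ∑ n ∈ range M, H n ^ p
      ≤ p * ∑ n ∈ range M, a n * H n ^ (p-1) := by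
    have h1 : ∀ n ∈ range M, (p-1) * H n ^ p
        ≤ p * (a n * H n ^ (p-1)) + (D n - D (n+1)) := by
      intro n _
      simp only [hHdef, hDdef]
      push_cast
      linarith [hardy_step hp a ha n]
    have h2 := sum_le_sum h1
    rw [sum_add_distrib, Finset.sum_range_sub' D M] at h2
    have hD0 : D 0 = 0 := by
      simp only [hDdef, range_zero, sum_empty, Nat.cast_zero]
      rw [Real.zero_rpow (ne_of_gt hppos), zero_div]
    have hDM : 0 ≤ D M :=
      div_nonneg (Real.rpow_nonneg (sum_nonneg fun k _ => ha k) _) (Real.rpow_nonneg (Nat.cast_nonneg M) _)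
    rw [Finset.mul_sum, Finset.mul_sum] at *
    rw [hD0] at h2
    linarith
  set X : ℝ := ∑ n ∈ range M, H n ^ p with hX
  set Y : ℝ := ∑ n ∈ range M, a n ^ p with hY
  have hX0 : 0 ≤ X := sum_nonneg fun n _ => Real.rpow_nonneg (hHn n) _
  have hY0 : 0 ≤ Y := sum_nonneg fun n _ => Real.rpow_nonneg (ha n) _
  have hpq : Real.HolderConjugate p (p / (p - 1)) := Real.HolderConjugate.conjExponent hp
  have hholder : ∑ n ∈ range M, a n * H n ^ (p-1) ≤ Y ^ (1/p) * X ^ (1 - 1/p) := by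
    have h := Real.inner_le_Lp_mul_Lq_of_nonneg (f := a) (g := fun i => H i ^ (p-1))
      (range M) hpq (fun i _ => ha i) (fun i _ => Real.rpow_nonneg (hHn i) _)
    have hXeq : ∑ i ∈ range M, (H i ^ (p-1)) ^ (p/(p-1)) = X := by
      refine Finset.sum_congr rfl fun i _ => ?_
      exact rpow_conj hp (hHn i)
    rw [hXeq] at h
    have hq : 1 / (p/(p-1)) = 1 - 1/p := by field_simp
    rw [hq] at h
    exact h
  rcases eq_or_lt_of_le hX0 with hX0' | hXpos
  · rw [← hX0']
    positivity
  · -- X^(1/p) ≤ (p/(p-1)) * Y^(1/p)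
    have hXq : (0:ℝ) < X ^ (1 - 1/p) := Real.rpow_pos_of_pos hXpos _
    have hsplit : X = X ^ (1/p) * X ^ (1 - 1/p) := by
      rw [← Real.rpow_add hXpos]
      norm_num
    have step : (p - 1) * (X ^ (1/p) * X ^ (1 - 1/p)) ≤ p * (Y ^ (1/p) * X ^ (1 - 1/p)) := by
      rw [← hsplit]
      calc (p-1) * X ≤ p * ∑ n ∈ range M, a n * H n ^ (p-1) := hsum1
        _ ≤ p * (Y ^ (1/p) * X ^ (1 - 1/p)) := by
            exact mul_le_mul_of_nonneg_left hholder (le_of_lt hppos)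
    have step2 : (p - 1) * X ^ (1/p) ≤ p * Y ^ (1/p) := by
      have h := step
      rw [← mul_assoc, ← mul_assoc] at h
      exact le_of_mul_le_mul_right h hXq
    have step3 : X ^ (1/p) ≤ (p/(p-1)) * Y ^ (1/p) := by
      rw [div_mul_eq_mul_div, le_div_iff₀ hp1]
      linarith
    have final : X ≤ (p/(p-1)) ^ p * Y := by
      have h4 := Real.rpow_le_rpow (Real.rpow_nonneg hX0 _) step3 (le_of_lt hppos)
      rw [← Real.rpow_mul hX0, one_div_mul_cancel (ne_of_gt hppos), Real.rpow_one] at h4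
      rw [Real.mul_rpow (by positivity) (Real.rpow_nonneg hY0 _)] at h4
      rw [← Real.rpow_mul hY0, one_div_mul_cancel (ne_of_gt hppos), Real.rpow_one] at h4
      exact h4
    exact final

/-! ### Rearrangement -/

noncomputable def astar (a : ℕ → ℝ) (N : ℕ) : ℕ → ℝ :=
  fun k => (((List.range N).map a).insertionSort (· ≥ ·)).getD k 0

section Rearrangement

variable (a : ℕ → ℝ) (N : ℕ)

lemma sortlen : (((List.range N).map a).insertionSort (· ≥ ·)).length = N := by
  rw [(List.perm_insertionSort _ _).length_eq, List.length_map, List.length_range]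

lemma astar_eq_zero {k : ℕ} (hk : N ≤ k) : astar a N k = 0 := by
  unfold astar
  rw [List.getD_eq_default]
  rw [sortlen]; exact hk

lemma astar_nonneg (ha : ∀ k, 0 ≤ a k) (k : ℕ) : 0 ≤ astar a N k := by
  unfold astar
  rcases lt_or_ge k (((List.range N).map a).insertionSort (· ≥ ·)).length with h | h
  · rw [List.getD_eq_getElem _ _ h]
    have hmem := List.getElem_mem h
    rw [(List.perm_insertionSort _ _).mem_iff, List.mem_map] at hmem
    obtain ⟨i, _, hi⟩ := hmem
    rw [← hi]; exact ha i
  · rw [List.getD_eq_default _ _ h]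

lemma astar_anti (ha : ∀ k, 0 ≤ a k) {i j : ℕ} (hij : i ≤ j) :
    astar a N j ≤ astar a N i := by
  set l := ((List.range N).map a).insertionSort (· ≥ ·) with hl
  have hs : List.Pairwise (· ≥ ·) l := List.pairwise_insertionSort _ _
  rcases lt_or_ge j l.length with hj | hj
  · have hi : i < l.length := lt_of_le_of_lt hij hj
    unfold astar
    rw [← hl, List.getD_eq_getElem _ _ hj, List.getD_eq_getElem _ _ hi]
    rcases eq_or_lt_of_le hij with rfl | hlt
    · exact le_refl _
    · exact List.pairwise_iff_getElem.1 hs i j hi hj hlt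
  · rw [astar_eq_zero a N (by rw [← sortlen a N]; exact hj)]
    exact astar_nonneg a N ha i

lemma sum_range_eq_list (g : ℕ → ℝ) (n : ℕ) :
    ∑ k ∈ range n, g k = ((List.range n).map g).sum := by
  induction n with
  | zero => simp
  | succ n ih => simp [Finset.sum_range_succ, List.range_succ, ih]

lemma map_astar_eq : (List.range N).map (astar a N) =
    ((List.range N).map a).insertionSort (· ≥ ·) := by
  apply List.ext_getElem
  · rw [List.length_map, List.length_range, sortlen]
  · intro i h1 h2
    rw [List.getElem_map, List.getElem_range]
    unfold astar
    exact List.getD_eq_getElem _ _ h2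

lemma sum_astar_eq (f : ℝ → ℝ) :
    ∑ k ∈ range N, f (astar a N k) = ∑ k ∈ range N, f (a k) := by
  rw [sum_range_eq_list, sum_range_eq_list]
  have h1 : (List.range N).map (fun k => f (astar a N k)) =
      (((List.range N).map (astar a N)).map f) := by rw [List.map_map]; rfl
  have h2 : (List.range N).map (fun k => f (a k)) = (((List.range N).map a).map f) := by
    rw [List.map_map]; rfl
  rw [h1, h2, map_astar_eq]
  exact ((List.perm_insertionSort _ _).map f).sum_eq

lemma astar_count {v : ℝ} {c : ℕ} (t : Finset ℕ) (ht : t ⊆ range N)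
    (htc : t.card = c + 1) (hv : ∀ k ∈ t, v ≤ a k) : v ≤ astar a N c := by
  set l := ((List.range N).map a).insertionSort (· ≥ ·) with hl
  have hs : List.Pairwise (· ≥ ·) l := List.pairwise_insertionSort _ _
  by_contra hlt
  push_neg at hlt
  -- multiset count
  have hcount : (c + 1 : ℕ) ≤ Multiset.countP (fun x => v ≤ x) (l : Multiset ℝ) := by
    have hml : (l : Multiset ℝ) = Multiset.map a (Finset.range N).val := by
      rw [Finset.range_val]
      have : (Multiset.range N) = ((List.range N : List ℕ) : Multiset ℕ) := rfl
      rw [this, Multiset.map_coe, Multiset.coe_eq_coe]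
      exact List.perm_insertionSort _ _
    rw [hml]
    have hle : Multiset.map a t.val ≤ Multiset.map a (Finset.range N).val :=
      Multiset.map_le_map (Finset.val_le_iff.2 ht)
    have hcard : Multiset.countP (fun x => v ≤ x) (Multiset.map a t.val) = c + 1 := by
      have hall : ∀ x ∈ Multiset.map a t.val, v ≤ x := by
        intro x hx
        rw [Multiset.mem_map] at hx
        obtain ⟨k, hk, rfl⟩ := hx
        exact hv k hk
      rw [Multiset.countP_eq_card.2 hall, Multiset.card_map]
      exact htc
    rw [← hcard]
    exact Multiset.countP_le_of_le _ hle
  rw [Multiset.coe_countP] at hcount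
  -- list count bound
  have hcl : c < l.length := by
    by_contra hcl
    push_neg at hcl
    have := List.countP_le_length (l := l) (p := fun b => decide (v ≤ b))
    omega
  have hgc : l.getD c 0 = l[c] := List.getD_eq_getElem _ _ hcl
  have hdrop : List.countP (fun b => decide (v ≤ b)) (l.drop c) = 0 := by
    rw [List.countP_eq_zero]
    intro x hx
    rw [List.mem_iff_getElem] at hx
    obtain ⟨i, hi, rfl⟩ := hx
    have hci : c + i < l.length := by rw [List.length_drop] at hi; omega
    have hle : (l.drop c)[i] ≤ l[c] := by
      rw [List.getElem_drop]
      rcases Nat.eq_zero_or_pos i with rfl | hi0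
      · simp
      · exact List.pairwise_iff_getElem.1 hs c (c + i) hcl hci (by omega)
    simp only [decide_eq_true_eq, not_le]
    calc (l.drop c)[i] ≤ l[c] := hle
      _ < v := by rw [← hgc]; exact hlt
  have htake : List.countP (fun b => decide (v ≤ b)) (l.take c) ≤ c := by
    calc List.countP (fun b => decide (v ≤ b)) (l.take c) ≤ (l.take c).length :=
          List.countP_le_length
      _ ≤ c := by rw [List.length_take]; omega
  have hsplit := List.countP_append (l₁ := l.take c) (l₂ := l.drop c)
    (p := fun b => decide (v ≤ b))
  rw [List.take_append_drop] at hsplit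
  omega

lemma sum_le_sum_astar (ha : ∀ k, 0 ≤ a k) :
    ∀ (c : ℕ) (s : Finset ℕ), s ⊆ range N → s.card = c →
      ∑ k ∈ s, a k ≤ ∑ k ∈ range c, astar a N k := by
  intro c
  induction c with
  | zero =>
    intro s _ hcard
    rw [Finset.card_eq_zero] at hcard
    simp [hcard]
  | succ c ih =>
    intro s hs hcard
    have hne : s.Nonempty := Finset.card_pos.1 (by omega)
    obtain ⟨k0, hk0s, hk0min⟩ := Finset.exists_min_image s a hne
    have hkey : a k0 ≤ astar a N c := astar_count a N s hs hcard hk0min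
    have herase : ∑ k ∈ s.erase k0, a k ≤ ∑ k ∈ range c, astar a N k :=
      ih (s.erase k0) (fun x hx => hs (Finset.mem_of_mem_erase hx))
        (by rw [Finset.card_erase_of_mem hk0s, hcard]; omega)
    rw [← Finset.add_sum_erase s a hk0s, Finset.sum_range_succ]
    linarith

lemma range_sum_le_astar (ha : ∀ k, 0 ≤ a k) (hsup : ∀ k, N ≤ k → a k = 0) (m : ℕ) :
    ∑ k ∈ range m, a k ≤ ∑ k ∈ range m, astar a N k := by
  have h1 : ∑ k ∈ range m, a k = ∑ k ∈ range (min m N), a k := by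
    refine (Finset.sum_subset (Finset.range_subset_range.2 (min_le_left m N)) ?_).symm
    intro k hk hk2
    rw [Finset.mem_range] at hk
    rw [Finset.mem_range, not_lt] at hk2
    apply hsup
    rcases le_or_gt N k with h | h
    · exact h
    · exfalso; exact absurd (lt_min hk h) (not_lt.2 hk2)
  rw [h1]
  calc ∑ k ∈ range (min m N), a k ≤ ∑ k ∈ range (min m N), astar a N k :=
        sum_le_sum_astar a N ha (min m N) (range (min m N))
          (Finset.range_subset_range.2 (min_le_right m N)) (Finset.card_range _)
    _ ≤ ∑ k ∈ range m, astar a N k :=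
        Finset.sum_le_sum_of_subset_of_nonneg (Finset.range_subset_range.2 (min_le_left m N))
          (fun k _ _ => astar_nonneg a N ha k)

lemma avg_anti (ha : ∀ k, 0 ≤ a k) {n m : ℕ} (hnm : n ≤ m) :
    (∑ k ∈ range (m+1), astar a N k) / ((m:ℝ)+1)
      ≤ (∑ k ∈ range (n+1), astar a N k) / ((n:ℝ)+1) := by
  induction m, hnm using Nat.le_induction with
  | base => exact le_refl _
  | succ m hnm ih =>
    refine le_trans ?_ ih
    have hm1 : (0:ℝ) < (m:ℝ) + 1 := by positivity
    have hm2 : (0:ℝ) < (m:ℝ) + 1 + 1 := by positivity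
    rw [div_le_div_iff₀ (by push_cast; linarith) hm1]
    have hsum : ∑ k ∈ range (m+2), astar a N k
        = ∑ k ∈ range (m+1), astar a N k + astar a N (m+1) := Finset.sum_range_succ _ _
    have hbig : ((m:ℝ)+1) * astar a N (m+1) ≤ ∑ k ∈ range (m+1), astar a N k := by
      have h := Finset.sum_le_sum (f := fun _ => astar a N (m+1)) (g := astar a N)
        (s := range (m+1)) (fun i hi => astar_anti a N ha (by
          rw [Finset.mem_range] at hi; omega))
      rw [Finset.sum_const, Finset.card_range, nsmul_eq_mul] at h
      push_cast at h
      exact h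
    push_cast
    nlinarith [hbig, astar_nonneg a N ha (m+1),
      Finset.sum_nonneg (fun k (_ : k ∈ range (m+1)) => astar_nonneg a N ha k)]

end Rearrangement

end ImprovedHardy

/-- **Improved discrete Hardy inequality (Frank–Laptev–Weidl type, discrete version).**
Sequences indexed by the positive integers are encoded as `ψ : ℕ → ℝ`, where `ψ n`
represents the term `ψ(n+1)`; thus `1/((n:ℝ)+1)` is `1/n` for the positive integer
`n+1`, `Finset.range (m+1)` encodes `{1, …, m+1}`, and the supremum ranges over all
positive integers `m`. -/
theorem improved_discrete_hardy (p : ℝ) (hp : 1 < p)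
    (ψ : ℕ → ℝ) (hψ : (Function.support ψ).Finite) :
    ∑' n : ℕ, ⨆ m : ℕ,
        |min (1 / ((n : ℝ) + 1)) (1 / ((m : ℝ) + 1)) * ∑ k ∈ Finset.range (m + 1), ψ k| ^ p
      ≤ (p / (p - 1)) ^ p * ∑' n : ℕ, |ψ n| ^ p := by
  classical
  open ImprovedHardy Finset in
  have hppos : (0:ℝ) < p := by linarith
  -- support bound
  obtain ⟨Nb, hNb⟩ := hψ.bddAbove
  set N : ℕ := Nb + 1 with hNdef
  have hN : ∀ k, N ≤ k → ψ k = 0 := by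
    intro k hk
    by_contra h
    have : k ∈ Function.support ψ := h
    have := hNb this
    omega
  set a : ℕ → ℝ := fun k => |ψ k| with hadef
  have ha : ∀ k, 0 ≤ a k := fun k => abs_nonneg _
  have hasup : ∀ k, N ≤ k → a k = 0 := fun k hk => by
    rw [hadef]; simp [hN k hk]
  set b : ℕ → ℝ := astar a N with hbdef
  have hbnn : ∀ k, 0 ≤ b k := astar_nonneg a N ha
  set Hs : ℕ → ℝ := fun n => (∑ k ∈ Finset.range (n+1), b k) / ((n:ℝ)+1) with hHsdef
  have hHsnn : ∀ n, 0 ≤ Hs n := fun n =>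
    div_nonneg (Finset.sum_nonneg fun k _ => hbnn k) (by positivity)
  -- pointwise bound on sup terms
  have hbound : ∀ n m : ℕ,
      |min (1 / ((n : ℝ) + 1)) (1 / ((m : ℝ) + 1)) * ∑ k ∈ Finset.range (m + 1), ψ k|
        ≤ Hs n := by
    intro n m
    have hn1 : (0:ℝ) < 1 / ((n:ℝ)+1) := by positivity
    have hm1 : (0:ℝ) < 1 / ((m:ℝ)+1) := by positivity
    have hminpos : (0:ℝ) < min (1 / ((n:ℝ)+1)) (1 / ((m:ℝ)+1)) := lt_min hn1 hm1
    rw [abs_mul, abs_of_pos hminpos]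
    have habs : |∑ k ∈ Finset.range (m+1), ψ k| ≤ ∑ k ∈ Finset.range (m+1), a k :=
      Finset.abs_sum_le_sum_abs _ _
    have hstep1 : min (1 / ((n:ℝ)+1)) (1 / ((m:ℝ)+1)) * |∑ k ∈ Finset.range (m+1), ψ k|
        ≤ min (1 / ((n:ℝ)+1)) (1 / ((m:ℝ)+1)) * ∑ k ∈ Finset.range (m+1), a k :=
      mul_le_mul_of_nonneg_left habs (le_of_lt hminpos)
    refine hstep1.trans ?_
    have hpartial := range_sum_le_astar a N ha hasup (m+1)
    rcases le_total m n with hmn | hnm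
    · have hmin : min (1 / ((n:ℝ)+1)) (1 / ((m:ℝ)+1)) = 1 / ((n:ℝ)+1) := by
        apply min_eq_left
        apply one_div_le_one_div_of_le (by positivity)
        push_cast
        exact_mod_cast by exact_mod_cast (by omega : (m:ℕ)+1 ≤ n+1)
      rw [hmin]
      have h2 : ∑ k ∈ Finset.range (m+1), a k ≤ ∑ k ∈ Finset.range (n+1), b k := by
        refine hpartial.trans ?_
        exact Finset.sum_le_sum_of_subset_of_nonneg
          (Finset.range_subset_range.2 (by omega)) (fun k _ _ => hbnn k)
      rw [hHsdef]
      calc 1 / ((n:ℝ)+1) * ∑ k ∈ Finset.range (m+1), a k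
          ≤ 1 / ((n:ℝ)+1) * ∑ k ∈ Finset.range (n+1), b k :=
            mul_le_mul_of_nonneg_left h2 (le_of_lt hn1)
        _ = (∑ k ∈ Finset.range (n+1), b k) / ((n:ℝ)+1) := by ring
    · have hmin : min (1 / ((n:ℝ)+1)) (1 / ((m:ℝ)+1)) = 1 / ((m:ℝ)+1) := by
        apply min_eq_right
        apply one_div_le_one_div_of_le (by positivity)
        exact_mod_cast by exact_mod_cast (by omega : (n:ℕ)+1 ≤ m+1)
      rw [hmin]
      calc 1 / ((m:ℝ)+1) * ∑ k ∈ Finset.range (m+1), a k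
          ≤ 1 / ((m:ℝ)+1) * ∑ k ∈ Finset.range (m+1), b k :=
            mul_le_mul_of_nonneg_left hpartial (le_of_lt hm1)
        _ = Hs m := by rw [hHsdef]; ring
        _ ≤ Hs n := avg_anti a N ha hnm
  have hboundp : ∀ n m : ℕ,
      |min (1 / ((n : ℝ) + 1)) (1 / ((m : ℝ) + 1)) * ∑ k ∈ Finset.range (m + 1), ψ k| ^ p
        ≤ Hs n ^ p := fun n m =>
    Real.rpow_le_rpow (abs_nonneg _) (hbound n m) (le_of_lt hppos)
  -- the tsum on the right
  have hsummable : Summable (fun n : ℕ => |ψ n| ^ p) := by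
    apply summable_of_ne_finset_zero (s := Finset.range N)
    intro k hk
    rw [Finset.mem_range, not_lt] at hk
    rw [hN k hk, abs_zero, Real.zero_rpow (ne_of_gt hppos)]
  have hT : ∀ M : ℕ, ∑ n ∈ Finset.range M, b n ^ p ≤ ∑' n : ℕ, |ψ n| ^ p := by
    intro M
    calc ∑ n ∈ Finset.range M, b n ^ p
        ≤ ∑ n ∈ Finset.range (max M N), b n ^ p :=
          Finset.sum_le_sum_of_subset_of_nonneg (Finset.range_subset_range.2 (le_max_left M N))
            (fun k _ _ => Real.rpow_nonneg (hbnn k) _)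
      _ = ∑ n ∈ Finset.range N, b n ^ p := by
          refine (Finset.sum_subset (Finset.range_subset_range.2 (le_max_right M N)) ?_).symm
          intro k _ hk2
          rw [Finset.mem_range, not_lt] at hk2
          rw [hbdef, astar_eq_zero a N hk2, Real.zero_rpow (ne_of_gt hppos)]
      _ = ∑ n ∈ Finset.range N, a n ^ p := sum_astar_eq a N (fun x => x ^ p)
      _ = ∑ n ∈ Finset.range N, |ψ n| ^ p := rfl
      _ ≤ ∑' n : ℕ, |ψ n| ^ p :=
          Summable.sum_le_tsum _ (fun k _ => Real.rpow_nonneg (abs_nonneg _) _) hsummable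
  -- conclude
  apply Real.tsum_le_of_sum_range_le
  · intro n
    apply Real.iSup_nonneg
    intro m
    exact Real.rpow_nonneg (abs_nonneg _) _
  · intro M
    have h1 : ∀ n ∈ Finset.range M, (⨆ m : ℕ,
        |min (1 / ((n : ℝ) + 1)) (1 / ((m : ℝ) + 1)) * ∑ k ∈ Finset.range (m + 1), ψ k| ^ p)
        ≤ Hs n ^ p := fun n _ => ciSup_le (hboundp n)
    calc ∑ n ∈ Finset.range M, (⨆ m : ℕ,
          |min (1 / ((n : ℝ) + 1)) (1 / ((m : ℝ) + 1)) * ∑ k ∈ Finset.range (m + 1), ψ k| ^ p)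
        ≤ ∑ n ∈ Finset.range M, Hs n ^ p := Finset.sum_le_sum h1
      _ ≤ (p / (p - 1)) ^ p * ∑ n ∈ Finset.range M, b n ^ p := hardy_finite hp b hbnn M
      _ ≤ (p / (p - 1)) ^ p * ∑' n : ℕ, |ψ n| ^ p := by
          exact mul_le_mul_of_nonneg_left (hT M)
            (Real.rpow_nonneg (div_nonneg (by linarith) (by linarith)) _)
end

section
/- Let 1 < p < ∞ be real. For every constant C < (p/(p-1))^p there exists a finitely supported sequence ψ : ℕ → ℝ such that ∑_{n=1}^∞ sup_{1 ≤ m < ∞} | min{1/n, 1/m} · ∑_{k=1}^m ψ(k) |^p > C ∑_{n=1}^∞ |ψ(n)|^p; that is, the constant (p/(p-1))^p in the improved discrete Hardy inequality is sharp. -/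
open Finset Real Filter

namespace HardySharpAux

lemma step (p : ℝ) (hp : 1 < p) (k : ℕ) :
    ((k:ℝ)+2)^(1-1/p) - ((k:ℝ)+1)^(1-1/p) ≤ (1-1/p) * ((k:ℝ)+1)^(-(1/p)) := by
  set q : ℝ := 1 - 1/p with hq
  have hk : (0:ℝ) < (k:ℝ)+1 := by positivity
  have h1 : ((k:ℝ)+2) = ((k:ℝ)+1) * (1 + 1/((k:ℝ)+1)) := by field_simp; ring
  have hq0 : 0 ≤ q := by
    have h : 1/p ≤ 1 := by rw [div_le_one (by linarith)]; linarith
    rw [hq]; linarith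
  have hq1 : q ≤ 1 := by
    have h : 0 < 1/p := one_div_pos.mpr (by linarith)
    rw [hq]; linarith
  have h2 : (1 + 1/((k:ℝ)+1))^q ≤ 1 + q * (1/((k:ℝ)+1)) :=
    rpow_one_add_le_one_add_mul_self (neg_one_lt_zero.le.trans (by positivity)) hq0 hq1
  calc ((k:ℝ)+2)^q - ((k:ℝ)+1)^q
      = ((k:ℝ)+1)^q * (1 + 1/((k:ℝ)+1))^q - ((k:ℝ)+1)^q := by
        rw [h1, Real.mul_rpow hk.le (by positivity)]
    _ ≤ ((k:ℝ)+1)^q * (1 + q * (1/((k:ℝ)+1))) - ((k:ℝ)+1)^q := by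
        have := Real.rpow_nonneg hk.le q
        nlinarith [mul_le_mul_of_nonneg_left h2 this]
    _ = q * (((k:ℝ)+1)^q * ((k:ℝ)+1)⁻¹) := by ring_nf
    _ = q * ((k:ℝ)+1)^(-(1/p)) := by
        rw [← Real.rpow_neg_one ((k:ℝ)+1), ← Real.rpow_add hk]
        ring_nf
        rw [hq]; ring_nf

lemma partial_sum_lb (p : ℝ) (hp : 1 < p) (n : ℕ) :
    (p/(p-1)) * (((n:ℝ)+2)^(1-1/p) - 1) ≤ ∑ k ∈ range (n+1), ((k:ℝ)+1)^(-(1/p)) := by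
  have hq : (0:ℝ) < 1 - 1/p := by
    have h : 1/p < 1 := by rw [div_lt_one (by linarith)]; linarith
    linarith
  have tel : ∑ k ∈ range (n+1),
      ((((k:ℝ)+1)+1)^(1-1/p) - ((k:ℝ)+1)^(1-1/p)) = ((n:ℝ)+2)^(1-1/p) - 1 := by
    have := Finset.sum_range_sub (f := fun k => ((k:ℝ)+1)^(1-1/p)) (n+1)
    simp only [Nat.cast_add, Nat.cast_one] at this
    rw [this]; norm_num [show ((n:ℝ)+1+1) = (n:ℝ)+2 by ring]
  have hsum : ((n:ℝ)+2)^(1-1/p) - 1 ≤ (1-1/p) * ∑ k ∈ range (n+1), ((k:ℝ)+1)^(-(1/p)) := by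
    rw [← tel, Finset.mul_sum]
    apply Finset.sum_le_sum
    intro k _
    have := step p hp k
    calc (((k:ℝ)+1)+1)^(1-1/p) - ((k:ℝ)+1)^(1-1/p)
        = ((k:ℝ)+2)^(1-1/p) - ((k:ℝ)+1)^(1-1/p) := by ring_nf
      _ ≤ (1-1/p) * ((k:ℝ)+1)^(-(1/p)) := this
  have hpp : p/(p-1) = (1-1/p)⁻¹ := by field_simp
  rw [hpp, inv_mul_le_iff₀ hq]
  linarith [hsum]

lemma summable_shift {r : ℝ} (hr : 1 < r) : Summable (fun n : ℕ => ((n:ℝ)+1)^(-r)) := by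
  have h := (Real.summable_nat_rpow (p := -r)).2 (by linarith)
  have h2 := (summable_nat_add_iff 1).2 h
  simpa [Nat.cast_add, Nat.cast_one] using h2

lemma term_lb (p : ℝ) (hp : 1 < p) (n : ℕ) :
    (p/(p-1))^p * (((n:ℝ)+1)⁻¹ - p * ((n:ℝ)+1)^(-(1+(1-1/p)))) ≤
      |((n:ℝ)+1)⁻¹ * ∑ k ∈ range (n+1), ((k:ℝ)+1)^(-(1/p))|^p := by
  set q : ℝ := 1 - 1/p with hq
  set t : ℝ := (n:ℝ)+1 with htdef
  have hp0 : (0:ℝ) < p := by linarith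
  have ht0 : (0:ℝ) < t := by positivity
  have ht1 : (1:ℝ) ≤ t := by rw [htdef]; have : (0:ℝ) ≤ (n:ℝ) := Nat.cast_nonneg n; linarith
  have hq0 : 0 < q := by
    have h : 1/p < 1 := by rw [div_lt_one hp0]; linarith
    rw [hq]; linarith
  have hc0 : (0:ℝ) < p/(p-1) := by apply div_pos hp0; linarith
  set c : ℝ := p/(p-1) with hcdef
  set S : ℝ := ∑ k ∈ range (n+1), ((k:ℝ)+1)^(-(1/p)) with hSdef
  have h1 : c * (t^q - 1) ≤ S := by
    have hmono : t^q ≤ (t+1)^q := Real.rpow_le_rpow ht0.le (by linarith) hq0.le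
    have hlb := partial_sum_lb p hp n
    have ht2 : ((n:ℝ)+2) = t + 1 := by rw [htdef]; ring
    rw [ht2, ← hq, ← hcdef, ← hSdef] at hlb
    nlinarith
  have hS0 : 0 ≤ S := by
    rw [hSdef]; apply Finset.sum_nonneg; intro k _; positivity
  have h2 : (1:ℝ) ≤ t^q := by
    calc (1:ℝ) = t^(0:ℝ) := by rw [Real.rpow_zero]
    _ ≤ t^q := Real.rpow_le_rpow_of_exponent_le ht1 hq0.le
  have e1 : t⁻¹ * (c * (t^q - 1)) = c * (t^(q-1) - t⁻¹) := by
    rw [show t^(q-1) = t^(-1:ℝ) * t^q by rw [← Real.rpow_add ht0]; ring_nf]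
    rw [Real.rpow_neg_one t]
    ring
  have hlow0 : 0 ≤ c * (t^(q-1) - t⁻¹) := by
    rw [← e1]
    have h' : 0 ≤ c * (t^q - 1) := by nlinarith
    positivity
  have h3 : c * (t^(q-1) - t⁻¹) ≤ t⁻¹ * S := by
    rw [← e1]
    exact mul_le_mul_of_nonneg_left h1 (by positivity)
  have h4 : (c * (t^(q-1) - t⁻¹))^p ≤ |t⁻¹ * S|^p :=
    Real.rpow_le_rpow hlow0 (h3.trans (le_abs_self _)) hp0.le
  have ha0 : (0:ℝ) < t^(-q) := Real.rpow_pos_of_pos ht0 _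
  have ha1 : t^(-q) ≤ 1 := Real.rpow_le_one_of_one_le_of_nonpos ht1 (by linarith)
  have e2 : t^(q-1) - t⁻¹ = t^(q-1) * (1 - t^(-q)) := by
    rw [mul_sub, mul_one, ← Real.rpow_add ht0, ← Real.rpow_neg_one t]
    ring_nf
  have e3 : ((t^(q-1)):ℝ)^p = t⁻¹ := by
    rw [← Real.rpow_mul ht0.le, show (q-1)*p = -1 by rw [hq]; field_simp; ring, Real.rpow_neg_one]
  have hsub0 : 0 ≤ t^(q-1) - t⁻¹ := by
    rw [e2]
    exact mul_nonneg (Real.rpow_nonneg ht0.le _) (by linarith)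
  have e4 : t⁻¹ * t^(-q) = t^(-(1+q)) := by
    rw [← Real.rpow_neg_one t, ← Real.rpow_add ht0]
    ring_nf
  have h5 : t⁻¹ - p * t^(-(1+q)) ≤ (t^(q-1) - t⁻¹)^p := by
    have hb : 1 + p * (-(t^(-q))) ≤ (1 + -(t^(-q)))^p :=
      one_add_mul_self_le_rpow_one_add (by linarith) hp.le
    have hb' : 1 - p * t^(-q) ≤ (1 - t^(-q))^p := by
      have : (1 + -(t^(-q))) = 1 - t^(-q) := by ring
      rw [this] at hb; linarith
    calc t⁻¹ - p * t^(-(1+q)) = t⁻¹ * (1 - p * t^(-q)) := by rw [← e4]; ring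
      _ ≤ t⁻¹ * (1 - t^(-q))^p := mul_le_mul_of_nonneg_left hb' (by positivity)
      _ = (t^(q-1))^p * (1 - t^(-q))^p := by rw [e3]
      _ = (t^(q-1) * (1 - t^(-q)))^p :=
          (Real.mul_rpow (Real.rpow_nonneg ht0.le _) (by linarith)).symm
      _ = (t^(q-1) - t⁻¹)^p := by rw [← e2]
  calc c^p * (t⁻¹ - p * t^(-(1+q)))
      ≤ c^p * (t^(q-1) - t⁻¹)^p :=
        mul_le_mul_of_nonneg_left h5 (Real.rpow_nonneg hc0.le p)
    _ = (c * (t^(q-1) - t⁻¹))^p := (Real.mul_rpow hc0.le hsub0).symm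
    _ ≤ |t⁻¹ * S|^p := h4

end HardySharpAux

/-- **Sharpness of the constant in the improved discrete Hardy inequality.**
Sequences indexed by the positive integers are encoded as `ψ : ℕ → ℝ`, where `ψ n`
represents the term `ψ(n+1)`; the supremum ranges over all positive integers `m`
(encoded as `m + 1` for `m : ℕ`). For every `C < (p/(p-1))^p` there is a finitely
supported `ψ` for which the improved Hardy functional exceeds `C ∑ |ψ|^p`. -/
theorem improved_discrete_hardy_sharp (p : ℝ) (hp : 1 < p)
    (C : ℝ) (hC : C < (p / (p - 1)) ^ p) :
    ∃ ψ : ℕ → ℝ, (Function.support ψ).Finite ∧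
      C * ∑' n : ℕ, |ψ n| ^ p
        < ∑' n : ℕ, ⨆ m : ℕ,
            |min (1 / ((n : ℝ) + 1)) (1 / ((m : ℝ) + 1)) * ∑ k ∈ Finset.range (m + 1), ψ k| ^ p := by
  classical
  have hp0 : (0:ℝ) < p := by linarith
  have hc0 : (0:ℝ) < p/(p-1) := div_pos hp0 (by linarith)
  set A : ℝ := (p/(p-1))^p with hA
  have hA0 : 0 < A := Real.rpow_pos_of_pos hc0 p
  set q : ℝ := 1 - 1/p with hq
  have hq0 : 0 < q := by
    have h : 1/p < 1 := by rw [div_lt_one hp0]; linarith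
    rw [hq]; linarith
  have hsum1q : Summable (fun n : ℕ => ((n:ℝ)+1)^(-(1+q))) :=
    HardySharpAux.summable_shift (by linarith)
  set K : ℝ := ∑' n : ℕ, ((n:ℝ)+1)^(-(1+q)) with hK
  have hK0 : 0 ≤ K := tsum_nonneg fun n => Real.rpow_nonneg (by positivity) _
  have hAC : 0 < A - C := by linarith
  obtain ⟨N, hN⟩ :=
    (tendsto_sum_range_one_div_nat_succ_atTop.eventually_ge_atTop
      ((A*p*K + 1)/(A - C))).exists
  set H : ℝ := ∑ i ∈ Finset.range N, (1/((i:ℝ)+1)) with hH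
  have hHlb : A*p*K + 1 ≤ (A - C) * H := by
    rw [div_le_iff₀ hAC] at hN
    calc A*p*K + 1 ≤ H * (A - C) := hN
      _ = (A - C) * H := by ring
  set ψ : ℕ → ℝ := fun k => if k < N then ((k:ℝ)+1)^(-(1/p)) else 0 with hψ
  have hψ_zero : ∀ k, ¬ k < N → ψ k = 0 := fun k h => if_neg h
  have hψ_pos : ∀ k, k < N → ψ k = ((k:ℝ)+1)^(-(1/p)) := fun k h => if_pos h
  refine ⟨ψ, ?_, ?_⟩
  · apply Set.Finite.subset (Finset.range N).finite_toSet
    intro k hk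
    simp only [Function.mem_support, ne_eq] at hk
    by_contra h
    simp only [Finset.coe_range, Set.mem_Iio, not_lt] at h
    exact hk (hψ_zero k (not_lt.2 h))
  -- LHS evaluation
  have hLHS : ∑' n : ℕ, |ψ n|^p = H := by
    rw [tsum_eq_sum (s := Finset.range N)
      (fun n hn => by
        rw [hψ_zero n (fun h => hn (Finset.mem_range.2 h)), abs_zero,
          Real.zero_rpow hp0.ne'])]
    refine Finset.sum_congr rfl fun n hn => ?_
    rw [hψ_pos n (Finset.mem_range.1 hn),
      abs_of_nonneg (Real.rpow_nonneg (by positivity) _),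
      ← Real.rpow_mul (by positivity : (0:ℝ) ≤ (n:ℝ)+1),
      show (-(1/p))*p = -1 by field_simp, Real.rpow_neg_one, one_div]
  -- bound on partial sums
  set B : ℝ := ∑ k ∈ Finset.range N, |ψ k| with hB
  have hB0 : 0 ≤ B := Finset.sum_nonneg fun k _ => abs_nonneg _
  have habs : ∀ m : ℕ, |∑ k ∈ Finset.range (m+1), ψ k| ≤ B := by
    intro m
    have h1 : ∑ k ∈ Finset.range (m+1), ψ k
        = ∑ k ∈ Finset.range (m+1) ∩ Finset.range N, ψ k := by
      refine (Finset.sum_subset Finset.inter_subset_left ?_).symm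
      intro k hk hk2
      exact hψ_zero k fun h => hk2 (Finset.mem_inter.2 ⟨hk, Finset.mem_range.2 h⟩)
    rw [h1]
    calc |∑ k ∈ Finset.range (m+1) ∩ Finset.range N, ψ k|
        ≤ ∑ k ∈ Finset.range (m+1) ∩ Finset.range N, |ψ k| :=
          Finset.abs_sum_le_sum_abs _ _
      _ ≤ B := Finset.sum_le_sum_of_subset_of_nonneg Finset.inter_subset_right
            fun k _ _ => abs_nonneg _
  have hterm : ∀ n m : ℕ,
      |min (1/((n:ℝ)+1)) (1/((m:ℝ)+1)) * ∑ k ∈ Finset.range (m+1), ψ k|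
        ≤ (1/((n:ℝ)+1)) * B := by
    intro n m
    rw [abs_mul]
    have hmin0 : (0:ℝ) ≤ min (1/((n:ℝ)+1)) (1/((m:ℝ)+1)) :=
      le_min (by positivity) (by positivity)
    rw [abs_of_nonneg hmin0]
    exact mul_le_mul (min_le_left _ _) (habs m) (abs_nonneg _) (by positivity)
  have hbdd : ∀ n : ℕ, BddAbove (Set.range fun m : ℕ =>
      |min (1/((n:ℝ)+1)) (1/((m:ℝ)+1)) * ∑ k ∈ Finset.range (m+1), ψ k|^p) := by
    intro n
    refine ⟨((1/((n:ℝ)+1)) * B)^p, ?_⟩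
    rintro x ⟨m, rfl⟩
    exact Real.rpow_le_rpow (abs_nonneg _) (hterm n m) hp0.le
  have hg_nonneg : ∀ n : ℕ, 0 ≤ ⨆ m : ℕ,
      |min (1/((n:ℝ)+1)) (1/((m:ℝ)+1)) * ∑ k ∈ Finset.range (m+1), ψ k|^p :=
    fun n => Real.iSup_nonneg fun m => Real.rpow_nonneg (abs_nonneg _) _
  have hg_le : ∀ n : ℕ, (⨆ m : ℕ,
      |min (1/((n:ℝ)+1)) (1/((m:ℝ)+1)) * ∑ k ∈ Finset.range (m+1), ψ k|^p)
        ≤ ((1/((n:ℝ)+1)) * B)^p :=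
    fun n => ciSup_le fun m => Real.rpow_le_rpow (abs_nonneg _) (hterm n m) hp0.le
  have heq : ∀ n : ℕ, ((1/((n:ℝ)+1)) * B)^p = ((n:ℝ)+1)^(-p) * B^p := by
    intro n
    rw [Real.mul_rpow (by positivity) hB0, one_div, ← Real.rpow_neg_one,
      ← Real.rpow_mul (by positivity : (0:ℝ) ≤ (n:ℝ)+1)]
    norm_num
  have hgsummable : Summable (fun n : ℕ => ⨆ m : ℕ,
      |min (1/((n:ℝ)+1)) (1/((m:ℝ)+1)) * ∑ k ∈ Finset.range (m+1), ψ k|^p) := by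
    have hb2 : Summable (fun n : ℕ => ((1/((n:ℝ)+1)) * B)^p) :=
      ((HardySharpAux.summable_shift hp).mul_right (B^p)).congr fun n => (heq n).symm
    exact Summable.of_nonneg_of_le hg_nonneg hg_le hb2
  -- lower bound for each term with n < N
  have hlow : ∀ n ∈ Finset.range N,
      A * (((n:ℝ)+1)⁻¹ - p * ((n:ℝ)+1)^(-(1+q))) ≤ ⨆ m : ℕ,
        |min (1/((n:ℝ)+1)) (1/((m:ℝ)+1)) * ∑ k ∈ Finset.range (m+1), ψ k|^p := by
    intro n hn
    have hself := le_ciSup (hbdd n) n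
    refine le_trans ?_ hself
    have hSn : ∑ k ∈ Finset.range (n+1), ψ k
        = ∑ k ∈ Finset.range (n+1), ((k:ℝ)+1)^(-(1/p)) := by
      refine Finset.sum_congr rfl fun k hk => ?_
      exact hψ_pos k (lt_of_lt_of_le (Finset.mem_range.1 hk)
        (Nat.succ_le_of_lt (Finset.mem_range.1 hn)))
    rw [min_self, hSn, one_div]
    exact HardySharpAux.term_lb p hp n
  -- sum the lower bounds
  have hsum_y : ∑ n ∈ Finset.range N, ((n:ℝ)+1)^(-(1+q)) ≤ K :=
    Summable.sum_le_tsum (Finset.range N) (fun n _ => Real.rpow_nonneg (by positivity) _) hsum1q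
  have hsumlow : A * H - A * p * K ≤ ∑ n ∈ Finset.range N, ⨆ m : ℕ,
      |min (1/((n:ℝ)+1)) (1/((m:ℝ)+1)) * ∑ k ∈ Finset.range (m+1), ψ k|^p := by
    have h1 := Finset.sum_le_sum hlow
    have e : ∑ n ∈ Finset.range N, A * (((n:ℝ)+1)⁻¹ - p * ((n:ℝ)+1)^(-(1+q)))
        = A * H - A * p * (∑ n ∈ Finset.range N, ((n:ℝ)+1)^(-(1+q))) := by
      rw [hH]
      rw [Finset.sum_congr rfl (fun (n : ℕ) _ =>
        (mul_sub A (((n:ℝ)+1)⁻¹) (p * ((n:ℝ)+1)^(-(1+q))) : _)),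
        Finset.sum_sub_distrib, ← Finset.mul_sum, ← Finset.mul_sum]
      simp only [one_div]
      rw [← Finset.mul_sum, mul_assoc]
    have h2 : A * H - A * p * K ≤ A * H - A * p *
        (∑ n ∈ Finset.range N, ((n:ℝ)+1)^(-(1+q))) := by
      have : 0 ≤ A * p := by positivity
      nlinarith
    calc A * H - A * p * K ≤ A * H - A * p * _ := h2
      _ = _ := e.symm
      _ ≤ _ := h1
  -- conclude
  have hfin : ∑ n ∈ Finset.range N, (⨆ m : ℕ,
      |min (1/((n:ℝ)+1)) (1/((m:ℝ)+1)) * ∑ k ∈ Finset.range (m+1), ψ k|^p)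
      ≤ ∑' n : ℕ, ⨆ m : ℕ,
        |min (1/((n:ℝ)+1)) (1/((m:ℝ)+1)) * ∑ k ∈ Finset.range (m+1), ψ k|^p :=
    Summable.sum_le_tsum (Finset.range N) (fun n _ => hg_nonneg n) hgsummable
  rw [hLHS]
  have : C * H < A * H - A * p * K := by nlinarith
  calc C * H < A * H - A * p * K := this
    _ ≤ _ := le_trans hsumlow hfin
end

section
/- Let 1 < p < ∞ be real and let ψ : ℕ∪{0} → ℝ have finite support with ψ(0) = 0. Then ∑_{n=1}^∞ max{ sup_{1 ≤ m ≤ n} |ψ(m)|^p / n^p , sup_{n ≤ m < ∞} |ψ(m)|^p / m^p } ≤ (p/(p-1))^p ∑_{n=1}^∞ |∇ψ(n)|^p, where ∇ψ(n) := ψ(n) − ψ(n−1). -/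
open Finset

lemma aux_fin_le_apply {n : ℕ} (g : Fin n → ℕ) (hg : StrictMono g) (i : Fin n) :
    (i : ℕ) ≤ g i := by
  obtain ⟨v, hv⟩ := i
  induction v with
  | zero => exact Nat.zero_le _
  | succ k ih =>
      have hk : k < n := Nat.lt_of_succ_lt hv
      have h1 := ih hk
      have h2 : g ⟨k, hk⟩ < g ⟨k + 1, hv⟩ := hg (by simp [Fin.lt_def])
      simp only [Fin.val_mk] at h1 ⊢
      omega

lemma aux_sum_le_sum_range (b : ℕ → ℝ) (hb : Antitone b) (s : Finset ℕ) :
    ∑ x ∈ s, b x ≤ ∑ i ∈ Finset.range s.card, b i := by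
  have e := s.orderIsoOfFin rfl
  have h1 : ∑ x ∈ s, b x = ∑ i : Fin s.card, b (e i : ℕ) := by
    rw [← Finset.sum_coe_sort s b, ← Equiv.sum_comp e.toEquiv (fun x : {x // x ∈ s} => b x.1)]
    rfl
  rw [h1, Finset.sum_range fun i => b i]
  apply Finset.sum_le_sum
  intro i _
  apply hb
  have hsm : StrictMono (fun j : Fin s.card => ((e j : ℕ))) := fun a b h => by
    exact_mod_cast (OrderIso.lt_iff_lt e).2 h
  exact aux_fin_le_apply _ hsm i


lemma aux_core (p q : ℝ) (hp : 1 < p) (hq : q = p / (p - 1)) (nn αv β d : ℝ)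
    (hn : 0 ≤ nn) (hαv : 0 ≤ αv) (hβ : 0 ≤ β) (hd : d = (nn + 1) * αv - nn * β) :
    αv ^ p ≤ q * (d * αv ^ (p - 1)) + (nn * β ^ p - (nn + 1) * αv ^ p) / (p - 1) := by
  have hp0 : (0:ℝ) < p - 1 := by linarith
  have hp1 : (0:ℝ) < p := by linarith
  have hq0 : 0 < q := by rw [hq]; positivity
  have hpq : p.HolderConjugate q := hq ▸ Real.HolderConjugate.conjExponent hp
  have hRq : (αv ^ (p - 1)) ^ q = αv ^ p := by
    rw [← Real.rpow_mul hαv]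
    congr 1
    rw [hq]; field_simp
  have young : β * αv ^ (p - 1) ≤ β ^ p / p + αv ^ p / q := by
    have := Real.young_inequality_of_nonneg hβ (Real.rpow_nonneg hαv (p - 1)) hpq
    rwa [hRq] at this
  have hαR : αv * αv ^ (p - 1) = αv ^ p := by
    rw [show p = (p - 1) + 1 by ring, Real.rpow_add' hαv (by linarith), Real.rpow_one]
    ring
  have expand : q * (d * αv ^ (p - 1)) =
      q * (nn + 1) * (αv * αv ^ (p - 1)) - q * nn * (β * αv ^ (p - 1)) := by
    rw [hd]; ring
  rw [expand, hαR]
  have h3 : q * nn * (β * αv ^ (p - 1)) ≤ q * nn * (β ^ p / p + αv ^ p / q) :=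
    mul_le_mul_of_nonneg_left young (by positivity)
  have hfin : q * (nn + 1) * αv ^ p - q * nn * (β ^ p / p + αv ^ p / q)
      + (nn * β ^ p - (nn + 1) * αv ^ p) / (p - 1) = αv ^ p := by
    rw [hq]
    field_simp
    ring
  linarith [h3]

lemma aux_hardy (p : ℝ) (hp : 1 < p) (b : ℕ → ℝ) (hb : ∀ n, 0 ≤ b n) (M : ℕ) :
    ∑ n ∈ Finset.range M, ((∑ k ∈ Finset.range (n + 1), b k) / ((n : ℝ) + 1)) ^ p
      ≤ (p / (p - 1)) ^ p * ∑ k ∈ Finset.range M, b k ^ p := by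
  have hp0 : (0:ℝ) < p - 1 := by linarith
  have hp1 : (0:ℝ) < p := by linarith
  set q : ℝ := p / (p - 1) with hq
  have hq0 : (0:ℝ) < q := by positivity
  have hpq : p.HolderConjugate q := Real.HolderConjugate.conjExponent hp
  set A : ℕ → ℝ := fun n => ∑ k ∈ Finset.range n, b k with hA
  have hAnn : ∀ n, 0 ≤ A n := fun n => Finset.sum_nonneg fun k _ => hb k
  set α : ℕ → ℝ := fun n => A n / n with hα
  have hαnn : ∀ n, 0 ≤ α n := fun n => div_nonneg (hAnn n) (Nat.cast_nonneg n)
  set h : ℕ → ℝ := fun n => (n : ℝ) * α n ^ p with hh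
  have hhdef : ∀ n : ℕ, h n = (n : ℝ) * α n ^ p := fun n => rfl
  have hhnn : ∀ n, 0 ≤ h n := fun n =>
    mul_nonneg (Nat.cast_nonneg n) (Real.rpow_nonneg (hαnn n) p)
  have hRqα : ∀ n, (α n ^ (p - 1)) ^ q = α n ^ p := fun n => by
    rw [← Real.rpow_mul (hαnn n)]
    congr 1
    rw [hq]; field_simp
  -- the per-index inequality
  have key : ∀ n : ℕ, α (n + 1) ^ p
      ≤ q * (b n * α (n + 1) ^ (p - 1)) + (h n - h (n + 1)) / (p - 1) := by
    intro n
    have hAx : A n = (n : ℝ) * α n := by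
      rcases Nat.eq_zero_or_pos n with h0 | h0
      · simp [h0, hα, hA]
      · have hne : ((n : ℝ)) ≠ 0 := Nat.cast_ne_zero.2 h0.ne'
        rw [hα]; dsimp only; field_simp
    have hAy : A (n + 1) = ((n : ℝ) + 1) * α (n + 1) := by
      have hne : ((n : ℝ) + 1) ≠ 0 := by positivity
      have : α (n + 1) = A (n + 1) / ((n : ℝ) + 1) := by
        rw [hα]; push_cast; ring_nf
      rw [this]; field_simp
    have hd : b n = ((n : ℝ) + 1) * α (n + 1) - (n : ℝ) * α n := by
      rw [← hAy, ← hAx]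
      have : A (n + 1) = A n + b n := Finset.sum_range_succ b n
      linarith
    have hmain := aux_core p q hp hq (n : ℝ) (α (n + 1)) (α n) (b n)
      (Nat.cast_nonneg n) (hαnn (n + 1)) (hαnn n) hd
    have hcast : h (n + 1) = ((n : ℝ) + 1) * α (n + 1) ^ p := by
      rw [hhdef]; push_cast; ring
    rw [hhdef n, hcast]
    exact hmain
  set S : ℝ := ∑ n ∈ Finset.range M, α (n + 1) ^ p with hS
  set T : ℝ := ∑ k ∈ Finset.range M, b k ^ p with hT
  have hSnn : 0 ≤ S := Finset.sum_nonneg fun n _ => Real.rpow_nonneg (hαnn _) p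
  have hTnn : 0 ≤ T := Finset.sum_nonneg fun n _ => Real.rpow_nonneg (hb _) p
  -- telescoped bound
  have sum2 : S ≤ q * ∑ n ∈ Finset.range M, b n * α (n + 1) ^ (p - 1) := by
    have sum1 : S ≤ q * (∑ n ∈ Finset.range M, b n * α (n + 1) ^ (p - 1))
        + (h 0 - h M) / (p - 1) := by
      calc S ≤ ∑ n ∈ Finset.range M,
            (q * (b n * α (n + 1) ^ (p - 1)) + (h n - h (n + 1)) / (p - 1)) :=
              Finset.sum_le_sum fun n _ => key n
        _ = q * (∑ n ∈ Finset.range M, b n * α (n + 1) ^ (p - 1))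
            + (∑ n ∈ Finset.range M, (h n - h (n + 1))) / (p - 1) := by
              rw [Finset.sum_add_distrib, Finset.mul_sum, Finset.sum_div]
        _ = _ := by rw [Finset.sum_range_sub' h]
    have h00 : h 0 = 0 := by rw [hhdef]; simp
    have : (h 0 - h M) / (p - 1) ≤ 0 := by
      rw [h00]
      apply div_nonpos_of_nonpos_of_nonneg <;> [linarith [hhnn M]; linarith]
    linarith
  -- Young with parameter c
  set c : ℝ := q ^ (q⁻¹) with hc
  have hc0 : 0 < c := Real.rpow_pos_of_pos hq0 _
  have hcq : c ^ q = q := by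
    rw [hc, ← Real.rpow_mul hq0.le, inv_mul_cancel₀ hq0.ne', Real.rpow_one]
  have hcp : c ^ p = q ^ (p - 1) := by
    rw [hc, ← Real.rpow_mul hq0.le]
    congr 1
    rw [hq]; field_simp
  have young2 : ∀ n, b n * α (n + 1) ^ (p - 1)
      ≤ (c ^ p / p) * b n ^ p + (1 / (c ^ q * q)) * α (n + 1) ^ p := by
    intro n
    have h1 : b n * α (n + 1) ^ (p - 1) = (c * b n) * (α (n + 1) ^ (p - 1) / c) := by
      field_simp
    rw [h1]
    calc (c * b n) * (α (n + 1) ^ (p - 1) / c)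
        ≤ (c * b n) ^ p / p + (α (n + 1) ^ (p - 1) / c) ^ q / q :=
          Real.young_inequality_of_nonneg (mul_nonneg hc0.le (hb n))
            (div_nonneg (Real.rpow_nonneg (hαnn _) _) hc0.le) hpq
      _ = (c ^ p / p) * b n ^ p + (1 / (c ^ q * q)) * α (n + 1) ^ p := by
          rw [Real.mul_rpow hc0.le (hb n),
            Real.div_rpow (Real.rpow_nonneg (hαnn _) _) hc0.le, hRqα]
          ring
  have sum3 : ∑ n ∈ Finset.range M, b n * α (n + 1) ^ (p - 1)
      ≤ (c ^ p / p) * T + (1 / (q * q)) * S := by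
    calc ∑ n ∈ Finset.range M, b n * α (n + 1) ^ (p - 1)
        ≤ ∑ n ∈ Finset.range M,
            ((c ^ p / p) * b n ^ p + (1 / (c ^ q * q)) * α (n + 1) ^ p) :=
          Finset.sum_le_sum fun n _ => young2 n
      _ = (c ^ p / p) * T + (1 / (c ^ q * q)) * S := by
          rw [Finset.sum_add_distrib, ← Finset.mul_sum, ← Finset.mul_sum]
      _ = _ := by rw [hcq]
  have hS2 : S ≤ q * ((c ^ p / p) * T + (1 / (q * q)) * S) :=
    le_trans sum2 (mul_le_mul_of_nonneg_left sum3 hq0.le)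
  have hfrac : 1 - 1/q = 1/p := by rw [hq]; field_simp; ring
  have hdist : q * ((c ^ p / p) * T + (1 / (q * q)) * S) = (q * c ^ p / p) * T + (1/q) * S := by
    field_simp
  have e0 : S - (1/q) * S = (1 - 1/q) * S := by ring
  have e1 : (1 - 1/q) * S = (1/p) * S := by rw [hfrac]
  have hfin2 : (1/p) * S ≤ (q * c ^ p / p) * T := by linarith [hS2, hdist, e0, e1]
  have e2 : p * ((1/p) * S) = S := by field_simp
  have e3 : p * ((q * c ^ p / p) * T) = q * c ^ p * T := by field_simp
  have hfin3 : S ≤ q * c ^ p * T := by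
    have := mul_le_mul_of_nonneg_left hfin2 hp1.le
    rw [e2, e3] at this
    exact this
  have hqcp : q * c ^ p = q ^ p := by
    rw [hcp, show q * q ^ (p-1) = q ^ (1:ℝ) * q ^ (p-1) by rw [Real.rpow_one],
      ← Real.rpow_add hq0]
    congr 1
    ring
  rw [hqcp] at hfin3
  -- identify the goal sum with S
  have hgoal : ∑ n ∈ Finset.range M, ((∑ k ∈ Finset.range (n + 1), b k) / ((n : ℝ) + 1)) ^ p = S := by
    apply Finset.sum_congr rfl
    intro n _
    congr 1
    rw [hα, hA]
    push_cast
    ring_nf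
  rw [hgoal]
  exact hfin3


/-- **Gradient form of the improved discrete Hardy inequality.**
Here `ψ : ℕ → ℝ` is a finitely supported function on `ℕ ∪ {0}` with `ψ 0 = 0`, and
`∇ψ(n) = ψ(n) - ψ(n-1)`. The outer sum over positive integers `n` is written with
`n = n' + 1` for `n' : ℕ`; the inner suprema range over `1 ≤ m ≤ n` (`Set.Icc 1 (n'+1)`)
and `n ≤ m < ∞` (`Set.Ici (n'+1)`) respectively. -/
theorem improved_gradient_discrete_hardy (p : ℝ) (hp : 1 < p)
    (ψ : ℕ → ℝ) (hψ0 : ψ 0 = 0) (hψ : (Function.support ψ).Finite) :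
    ∑' n : ℕ, max (⨆ m ∈ Set.Icc 1 (n + 1), |ψ m| ^ p / ((n : ℝ) + 1) ^ p)
        (⨆ m ∈ Set.Ici (n + 1), |ψ m| ^ p / (m : ℝ) ^ p)
      ≤ (p / (p - 1)) ^ p * ∑' n : ℕ, |ψ (n + 1) - ψ n| ^ p := by
  have hp1 : (0:ℝ) < p := by linarith
  have hpne : p ≠ 0 := ne_of_gt hp1
  obtain ⟨N0, hN0⟩ := hψ.bddAbove
  set N : ℕ := N0 + 1 with hNdef
  have hψN : ∀ m, N ≤ m → ψ m = 0 := by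
    intro m hm
    by_contra h
    have hmem : m ∈ Function.support ψ := h
    have := hN0 hmem
    omega
  set a : ℕ → ℝ := fun k => |ψ (k + 1) - ψ k| with ha
  have ha_nn : ∀ k, 0 ≤ a k := fun k => abs_nonneg _
  have haN : ∀ k, N ≤ k → a k = 0 := by
    intro k hk
    have h1 : ψ k = 0 := hψN k hk
    have h2 : ψ (k + 1) = 0 := hψN (k + 1) (le_trans hk (Nat.le_succ k))
    simp [ha, h1, h2]
  set σ : Equiv.Perm (Fin N) := Tuple.sort (fun i : Fin N => -(a i)) with hσ
  set b : ℕ → ℝ := fun k => if h : k < N then a (σ ⟨k, h⟩) else 0 with hbdef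
  have hb_nn : ∀ k, 0 ≤ b k := by
    intro k; rw [hbdef]; dsimp only; split
    · exact ha_nn _
    · exact le_rfl
  have hb_eq : ∀ i : Fin N, b i = a (σ i) := by
    intro i
    rw [hbdef]; dsimp only; rw [dif_pos i.isLt]
  have hb_anti : Antitone b := by
    intro i j hij
    rcases lt_or_ge j N with hj | hj
    · have hi : i < N := lt_of_le_of_lt hij hj
      have hmono := Tuple.monotone_sort (fun i : Fin N => -(a i))
      have hle : ((⟨i, hi⟩ : Fin N)) ≤ ⟨j, hj⟩ := hij
      have h2 := hmono hle
      simp only [Function.comp_apply, neg_le_neg_iff] at h2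
      rw [hbdef]; dsimp only; rw [dif_pos hi, dif_pos hj]
      exact h2
    · have hj0 : b j = 0 := by rw [hbdef]; dsimp only; rw [dif_neg (not_lt.2 hj)]
      rw [hj0]; exact hb_nn i
  have hperm : ∀ f : ℝ → ℝ,
      ∑ k ∈ Finset.range N, f (b k) = ∑ k ∈ Finset.range N, f (a k) := by
    intro f
    rw [Finset.sum_range fun k => f (b k), Finset.sum_range fun k => f (a k)]
    rw [show (fun i : Fin N => f (b i)) = fun i => f (a (σ i)) from
      funext fun i => by rw [hb_eq]]
    exact Equiv.sum_comp σ (fun i => f (a i))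
  have hpre : ∀ m, m ≤ N →
      ∑ k ∈ Finset.range m, a k ≤ ∑ k ∈ Finset.range m, b k := by
    intro m hm
    set f : ℕ → ℕ := fun k => if h : k < N then ((σ.symm ⟨k, h⟩ : Fin N) : ℕ) else 0 with hf
    have hinj : ∀ x ∈ Finset.range m, ∀ y ∈ Finset.range m, f x = f y → x = y := by
      intro x hx y hy hxy
      have hxN : x < N := lt_of_lt_of_le (Finset.mem_range.1 hx) hm
      have hyN : y < N := lt_of_lt_of_le (Finset.mem_range.1 hy) hm
      rw [hf] at hxy; dsimp only at hxy
      rw [dif_pos hxN, dif_pos hyN] at hxy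
      have h1 : (σ.symm ⟨x, hxN⟩ : Fin N) = σ.symm ⟨y, hyN⟩ := Fin.val_injective hxy
      have h2 := σ.symm.injective h1
      exact congrArg Fin.val h2
    set s : Finset ℕ := (Finset.range m).image f with hs
    have hcard : s.card = m := by
      rw [hs, Finset.card_image_of_injOn fun x hx y hy h => hinj x hx y hy h,
        Finset.card_range]
    have h1 : ∑ x ∈ s, b x = ∑ k ∈ Finset.range m, b (f k) := Finset.sum_image hinj
    have h2 : ∀ k ∈ Finset.range m, b (f k) = a k := by
      intro k hk
      have hkN : k < N := lt_of_lt_of_le (Finset.mem_range.1 hk) hm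
      rw [hf]; dsimp only; rw [dif_pos hkN]
      have hlt : ((σ.symm ⟨k, hkN⟩ : Fin N) : ℕ) < N := (σ.symm ⟨k, hkN⟩).isLt
      rw [hbdef]; dsimp only; rw [dif_pos hlt]
      congr 1
      rw [show (⟨((σ.symm ⟨k, hkN⟩ : Fin N) : ℕ), hlt⟩ : Fin N) = σ.symm ⟨k, hkN⟩ from
        Fin.eta _ _]
      rw [Equiv.apply_symm_apply σ]
    calc ∑ k ∈ Finset.range m, a k = ∑ k ∈ Finset.range m, b (f k) :=
          Finset.sum_congr rfl fun k hk => (h2 k hk).symm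
      _ = ∑ x ∈ s, b x := h1.symm
      _ ≤ ∑ i ∈ Finset.range s.card, b i := aux_sum_le_sum_range b hb_anti s
      _ = ∑ i ∈ Finset.range m, b i := by rw [hcard]
  set A : ℕ → ℝ := fun m => ∑ k ∈ Finset.range m, a k with hA
  set B : ℕ → ℝ := fun m => ∑ k ∈ Finset.range m, b k with hB
  have hB_nn : ∀ m, 0 ≤ B m := fun m => Finset.sum_nonneg fun k _ => hb_nn k
  have hψ_le : ∀ m, |ψ m| ≤ A m := by
    intro m
    have h1 : ∑ k ∈ Finset.range m, (ψ (k + 1) - ψ k) = ψ m := by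
      rw [Finset.sum_range_sub ψ m, hψ0, sub_zero]
    calc |ψ m| = |∑ k ∈ Finset.range m, (ψ (k + 1) - ψ k)| := by rw [h1]
      _ ≤ ∑ k ∈ Finset.range m, |ψ (k + 1) - ψ k| := Finset.abs_sum_le_sum_abs _ _
      _ = A m := rfl
  have hAB : ∀ m, A m ≤ B m := by
    intro m
    rcases le_or_gt m N with hm | hm
    · exact hpre m hm
    · have hAm : A m = A N := by
        rw [hA]; dsimp only
        exact (Finset.sum_subset (Finset.range_subset_range.2 hm.le) fun k _ hk =>
          haN k (le_of_not_gt fun h => hk (Finset.mem_range.2 h))).symm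
      have hBm : B N ≤ B m := Finset.sum_le_sum_of_subset_of_nonneg
        (Finset.range_subset_range.2 hm.le) fun k _ _ => hb_nn k
      rw [hAm]; exact le_trans (hpre N le_rfl) hBm
  have hBmono : Monotone B := fun i j hij => Finset.sum_le_sum_of_subset_of_nonneg
    (Finset.range_subset_range.2 hij) fun k _ _ => hb_nn k
  have hstep : ∀ m : ℕ, 1 ≤ m → B (m + 1) / ((m : ℝ) + 1) ≤ B m / m := by
    intro m hm
    have hm0 : (0:ℝ) < m := by exact_mod_cast hm
    have hm1 : (0:ℝ) < (m : ℝ) + 1 := by linarith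
    rw [div_le_div_iff₀ hm1 hm0]
    have hBsucc : B (m + 1) = B m + b m := Finset.sum_range_succ b m
    have hlow : (m : ℝ) * b m ≤ B m := by
      have hterm : ∀ k ∈ Finset.range m, b m ≤ b k := fun k hk =>
        hb_anti (le_of_lt (Finset.mem_range.1 hk))
      calc (m : ℝ) * b m = ∑ _k ∈ Finset.range m, b m := by
            rw [Finset.sum_const, Finset.card_range, nsmul_eq_mul]
        _ ≤ B m := Finset.sum_le_sum hterm
    nlinarith [hBsucc, hlow]
  have hanti : ∀ m n : ℕ, 1 ≤ m → m ≤ n → B n / n ≤ B m / m := by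
    intro m n hm hmn
    induction n, hmn using Nat.le_induction with
    | base => exact le_rfl
    | succ n hmn ih =>
        have h1 := hstep n (le_trans hm hmn)
        have hc : ((n + 1 : ℕ) : ℝ) = (n : ℝ) + 1 := by push_cast; ring
        rw [hc]
        exact le_trans h1 ih
  set γ : ℕ → ℝ := fun n => B (n + 1) / ((n : ℝ) + 1) with hγ
  have hγnn : ∀ n, 0 ≤ γ n := fun n => div_nonneg (hB_nn _) (by positivity)
  have hmax : ∀ n : ℕ, max (⨆ m ∈ Set.Icc 1 (n + 1), |ψ m| ^ p / ((n : ℝ) + 1) ^ p)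
        (⨆ m ∈ Set.Ici (n + 1), |ψ m| ^ p / (m : ℝ) ^ p) ≤ γ n ^ p := by
    intro n
    have hγp : 0 ≤ γ n ^ p := Real.rpow_nonneg (hγnn n) p
    apply max_le
    · apply Real.iSup_le _ hγp
      intro m
      apply Real.iSup_le _ hγp
      intro hm
      obtain ⟨hm1, hm2⟩ := hm
      have h1 : |ψ m| ≤ B (n + 1) := le_trans (hψ_le m) (le_trans (hAB m) (hBmono hm2))
      have h2 : |ψ m| ^ p ≤ B (n + 1) ^ p := Real.rpow_le_rpow (abs_nonneg _) h1 hp1.le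
      have hpos : (0:ℝ) < ((n : ℝ) + 1) ^ p := Real.rpow_pos_of_pos (by positivity) p
      calc |ψ m| ^ p / ((n : ℝ) + 1) ^ p ≤ B (n + 1) ^ p / ((n : ℝ) + 1) ^ p :=
            (div_le_div_iff_of_pos_right hpos).mpr h2
        _ = γ n ^ p := by
            rw [hγ]; dsimp only; rw [Real.div_rpow (hB_nn _) (by positivity)]
    · apply Real.iSup_le _ hγp
      intro m
      apply Real.iSup_le _ hγp
      intro hm
      have hm1 : 1 ≤ m := le_trans (Nat.succ_le_succ (Nat.zero_le n)) hm
      have hmpos : (0:ℝ) < m := by exact_mod_cast hm1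
      have h1 : |ψ m| / m ≤ B m / m :=
        (div_le_div_iff_of_pos_right hmpos).mpr (le_trans (hψ_le m) (hAB m))
      have h2 : B m / m ≤ γ n := by
        have h3 := hanti (n + 1) m (Nat.succ_le_succ (Nat.zero_le n)) hm
        have hc : ((n + 1 : ℕ) : ℝ) = (n : ℝ) + 1 := by push_cast; ring
        rw [hγ]; dsimp only; rw [← hc]
        exact h3
      calc |ψ m| ^ p / (m : ℝ) ^ p = (|ψ m| / m) ^ p := by
            rw [Real.div_rpow (abs_nonneg _) hmpos.le]
        _ ≤ γ n ^ p := Real.rpow_le_rpow (div_nonneg (abs_nonneg _) hmpos.le)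
            (le_trans h1 h2) hp1.le
  set R : ℝ := ∑ k ∈ Finset.range N, a k ^ p with hR
  have hpartial : ∀ M : ℕ, ∑ n ∈ Finset.range M, γ n ^ p ≤ (p / (p - 1)) ^ p * R := by
    intro M
    have h1 : ∑ n ∈ Finset.range M, γ n ^ p
        = ∑ n ∈ Finset.range M, ((∑ k ∈ Finset.range (n + 1), b k) / ((n : ℝ) + 1)) ^ p := rfl
    rw [h1]
    have hconst : (0:ℝ) ≤ (p / (p - 1)) ^ p :=
      Real.rpow_nonneg (le_of_lt (div_pos hp1 (by linarith))) p
    calc ∑ n ∈ Finset.range M, ((∑ k ∈ Finset.range (n + 1), b k) / ((n : ℝ) + 1)) ^ p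
        ≤ (p / (p - 1)) ^ p * ∑ k ∈ Finset.range M, b k ^ p := aux_hardy p hp b hb_nn M
      _ ≤ (p / (p - 1)) ^ p * R := by
          apply mul_le_mul_of_nonneg_left _ hconst
          have hbp : ∑ k ∈ Finset.range N, b k ^ p = R := hperm (fun x => x ^ p)
          have hsub : ∑ k ∈ Finset.range M, b k ^ p
              ≤ ∑ k ∈ Finset.range (max M N), b k ^ p :=
            Finset.sum_le_sum_of_subset_of_nonneg (Finset.range_subset_range.2 (le_max_left M N))
              fun k _ _ => Real.rpow_nonneg (hb_nn k) p
          have heq : ∑ k ∈ Finset.range N, b k ^ p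
              = ∑ k ∈ Finset.range (max M N), b k ^ p := by
            apply Finset.sum_subset (Finset.range_subset_range.2 (le_max_right M N))
            intro k _ hk
            have hkN : N ≤ k := le_of_not_gt fun h => hk (Finset.mem_range.2 h)
            have hbk : b k = 0 := by rw [hbdef]; dsimp only; rw [dif_neg (not_lt.2 hkN)]
            rw [hbk, Real.zero_rpow hpne]
          rw [← hbp, heq]
          exact hsub
  have hγsum : Summable (fun n => γ n ^ p) :=
    summable_of_sum_range_le (fun n => Real.rpow_nonneg (hγnn n) p) hpartial
  have hγtsum : ∑' n, γ n ^ p ≤ (p / (p - 1)) ^ p * R :=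
    Real.tsum_le_of_sum_range_le (fun n => Real.rpow_nonneg (hγnn n) p) hpartial
  have hTnn : ∀ n : ℕ, 0 ≤ max (⨆ m ∈ Set.Icc 1 (n + 1), |ψ m| ^ p / ((n : ℝ) + 1) ^ p)
        (⨆ m ∈ Set.Ici (n + 1), |ψ m| ^ p / (m : ℝ) ^ p) := fun n =>
    le_trans (Real.iSup_nonneg fun m => Real.iSup_nonneg fun _ =>
      div_nonneg (Real.rpow_nonneg (abs_nonneg _) p)
        (Real.rpow_nonneg (by positivity) p)) (le_max_left _ _)
  have hTsum : Summable (fun n : ℕ =>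
      max (⨆ m ∈ Set.Icc 1 (n + 1), |ψ m| ^ p / ((n : ℝ) + 1) ^ p)
        (⨆ m ∈ Set.Ici (n + 1), |ψ m| ^ p / (m : ℝ) ^ p)) :=
    Summable.of_nonneg_of_le hTnn hmax hγsum
  have hRHS : ∑' n : ℕ, |ψ (n + 1) - ψ n| ^ p = R := by
    rw [hR]
    have := tsum_eq_sum (L := SummationFilter.unconditional ℕ) (f := fun n : ℕ => a n ^ p) (s := Finset.range N)
      (fun k hk => by
        have hkN : N ≤ k := le_of_not_gt fun h => hk (Finset.mem_range.2 h)
        show a k ^ p = 0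
        rw [haN k hkN, Real.zero_rpow hpne])
    exact this
  calc ∑' n : ℕ, max (⨆ m ∈ Set.Icc 1 (n + 1), |ψ m| ^ p / ((n : ℝ) + 1) ^ p)
        (⨆ m ∈ Set.Ici (n + 1), |ψ m| ^ p / (m : ℝ) ^ p)
      ≤ ∑' n, γ n ^ p := Summable.tsum_le_tsum hmax hTsum hγsum
    _ ≤ (p / (p - 1)) ^ p * R := hγtsum
    _ = (p / (p - 1)) ^ p * ∑' n : ℕ, |ψ (n + 1) - ψ n| ^ p := by rw [hRHS]
end

section
/- Let 1 < p < ∞ be real. For every constant C < (p/(p-1))^p there exists a finitely supported ψ : ℕ∪{0} → ℝ with ψ(0) = 0 such that ∑_{n=1}^∞ max{ sup_{1 ≤ m ≤ n} |ψ(m)|^p / n^p , sup_{n ≤ m < ∞} |ψ(m)|^p / m^p } > C ∑_{n=1}^∞ |∇ψ(n)|^p; that is, the constant (p/(p-1))^p in the gradient-form improved discrete Hardy inequality is sharp. -/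
open Real Set Finset

noncomputable def hPsi (p : ℝ) (N : ℕ) (n : ℕ) : ℝ :=
  if n ≤ N then (n : ℝ) ^ ((p - 1) / p)
  else if n ≤ 2 * N then (N : ℝ) ^ ((p - 1) / p) * (2 * (N : ℝ) - (n : ℝ)) / (N : ℝ)
  else 0

lemma hPsi_zero (p : ℝ) (hp : 1 < p) (N : ℕ) : hPsi p N 0 = 0 := by
  have h : (p - 1) / p ≠ 0 := (div_pos (by linarith) (by linarith)).ne'
  simp [hPsi, Real.zero_rpow h]

lemma hPsi_nonneg (p : ℝ) (N n : ℕ) : 0 ≤ hPsi p N n := by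
  unfold hPsi
  split_ifs with h1 h2
  · positivity
  · have h3 : (n : ℝ) ≤ 2 * (N : ℝ) := by exact_mod_cast h2
    have := Nat.cast_nonneg (α := ℝ) N
    apply div_nonneg (mul_nonneg (by positivity) (by linarith)) this
  · exact le_rfl

lemma hPsi_le (p : ℝ) (hp : 1 < p) (N n : ℕ) :
    hPsi p N n ≤ (N : ℝ) ^ ((p - 1) / p) := by
  have hθ : 0 ≤ (p - 1) / p := le_of_lt (div_pos (by linarith) (by linarith))
  unfold hPsi
  split_ifs with h1 h2
  · exact Real.rpow_le_rpow (Nat.cast_nonneg n) (by exact_mod_cast h1) hθ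
  · have hN : 0 < N := by omega
    have hNR : (0 : ℝ) < N := by exact_mod_cast hN
    have h3 : (N : ℝ) + 1 ≤ n := by exact_mod_cast Nat.succ_le_of_lt (not_le.mp h1)
    rw [div_le_iff₀ hNR]
    have : 2 * (N : ℝ) - n ≤ N := by linarith
    calc (N:ℝ) ^ ((p-1)/p) * (2 * N - n) ≤ (N:ℝ) ^ ((p-1)/p) * N :=
      mul_le_mul_of_nonneg_left this (Real.rpow_nonneg hNR.le _)
    _ = _ := rfl
  · positivity

lemma hPsi_eq_zero (p : ℝ) (hp : 1 < p) (N n : ℕ) (h : 2 * N ≤ n) : hPsi p N n = 0 := by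
  unfold hPsi
  split_ifs with h1 h2
  · have : n = 0 := by omega
    subst this
    have : N = 0 := by omega
    subst this
    simp [Real.zero_rpow ((div_pos (by linarith) (by linarith : (0:ℝ) < p)).ne' : (p-1)/p ≠ 0)]
  · have hn : n = 2 * N := by omega
    have : 2 * (N : ℝ) - n = 0 := by rw [hn]; push_cast; ring
    rw [this]
    ring
  · rfl

lemma hPsi_of_le (p : ℝ) (N n : ℕ) (h : n ≤ N) :
    hPsi p N n = (n : ℝ) ^ ((p - 1) / p) := by
  unfold hPsi; rw [if_pos h]

lemma hPsi_step (p : ℝ) (N n : ℕ) (h1 : N ≤ n) (h2 : n < 2 * N) :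
    hPsi p N (n + 1) - hPsi p N n = -((N : ℝ) ^ ((p - 1) / p) / N) := by
  have hN : 1 ≤ N := by omega
  have hNR : (0 : ℝ) < N := by exact_mod_cast Nat.cast_pos.mpr (by omega)
  rcases eq_or_lt_of_le h1 with rfl | hlt
  · unfold hPsi
    rw [if_neg (by omega), if_pos (by omega), if_pos le_rfl]
    push_cast
    field_simp
    ring
  · unfold hPsi
    rw [if_neg (by omega), if_pos (by omega), if_neg (by omega), if_pos (by omega)]
    push_cast
    field_simp
    ring

lemma rpow_ratio (p : ℝ) (hp : 1 < p) (x : ℝ) (hx : 0 < x) :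
    (x ^ ((p - 1) / p)) ^ p / x ^ p = 1 / x := by
  have hθp : (p - 1) / p * p = p - 1 := div_mul_cancel₀ _ (by linarith)
  rw [← Real.rpow_mul hx.le, hθp, ← Real.rpow_sub hx]
  have h : p - 1 - p = -1 := by ring
  rw [h, Real.rpow_neg_one, one_div]

lemma grad_bound (p : ℝ) (hp : 1 < p) (x : ℝ) (hx : 1 ≤ x) :
    ((x + 1) ^ ((p - 1) / p) - x ^ ((p - 1) / p)) ^ p ≤ ((p - 1) / p) ^ p * (1 / x) := by
  have hp0 : (0:ℝ) < p := by linarith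
  set θ := (p - 1) / p with hθdef
  have hθ0 : 0 < θ := div_pos (by linarith) hp0
  have hθ1 : θ < 1 := (div_lt_one hp0).mpr (by linarith)
  have hx0 : (0:ℝ) < x := by linarith
  have h1x : (0:ℝ) ≤ 1 / x := by positivity
  have key : (x + 1) ^ θ ≤ x ^ θ + θ * x ^ θ / x := by
    have hsplit : x + 1 = x * (1 + 1 / x) := by field_simp
    rw [hsplit, Real.mul_rpow hx0.le (by positivity)]
    have hb : (1 + 1 / x) ^ θ ≤ 1 + θ * (1 / x) :=
      rpow_one_add_le_one_add_mul_self (by linarith) hθ0.le hθ1.le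
    calc x ^ θ * (1 + 1 / x) ^ θ ≤ x ^ θ * (1 + θ * (1 / x)) :=
          mul_le_mul_of_nonneg_left hb (Real.rpow_nonneg hx0.le θ)
      _ = x ^ θ + θ * x ^ θ / x := by ring
  have hd0 : 0 ≤ (x + 1) ^ θ - x ^ θ :=
    sub_nonneg.mpr (Real.rpow_le_rpow hx0.le (by linarith) hθ0.le)
  have hstep : ((x + 1) ^ θ - x ^ θ) ^ p ≤ (θ * x ^ θ / x) ^ p :=
    Real.rpow_le_rpow hd0 (by linarith) hp0.le
  refine hstep.trans (le_of_eq ?_)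
  have hrw : θ * x ^ θ / x = θ * (x ^ θ / x) := by ring
  rw [hrw, Real.mul_rpow hθ0.le (by positivity),
    Real.div_rpow (Real.rpow_nonneg hx0.le _) hx0.le, rpow_ratio p hp x hx0]

/-- **Sharpness of the constant in the gradient-form improved discrete Hardy
inequality.** Here `ψ : ℕ → ℝ` is a finitely supported function on `ℕ ∪ {0}` with
`ψ 0 = 0`, and `∇ψ(n) = ψ(n) - ψ(n-1)`. The outer sum over positive integers `n`
is written with `n = n' + 1` for `n' : ℕ`; the inner suprema range over
`1 ≤ m ≤ n` (`Set.Icc 1 (n'+1)`) and `n ≤ m < ∞` (`Set.Ici (n'+1)`). -/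
theorem improved_gradient_discrete_hardy_sharp (p : ℝ) (hp : 1 < p)
    (C : ℝ) (hC : C < (p / (p - 1)) ^ p) :
    ∃ ψ : ℕ → ℝ, ψ 0 = 0 ∧ (Function.support ψ).Finite ∧
      C * ∑' n : ℕ, |ψ (n + 1) - ψ n| ^ p
        < ∑' n : ℕ, max (⨆ m ∈ Set.Icc 1 (n + 1), |ψ m| ^ p / ((n : ℝ) + 1) ^ p)
            (⨆ m ∈ Set.Ici (n + 1), |ψ m| ^ p / (m : ℝ) ^ p) := by
  have hp0 : (0:ℝ) < p := by linarith
  set θ : ℝ := (p - 1) / p with hθdef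
  have hθ0 : 0 < θ := div_pos (by linarith) hp0
  have hθ1 : θ < 1 := (div_lt_one hp0).mpr (by linarith)
  have hθppos : 0 < θ ^ p := Real.rpow_pos_of_pos hθ0 p
  have hconst : (p / (p - 1)) ^ p = (θ ^ p)⁻¹ := by
    rw [hθdef, ← Real.inv_rpow hθ0.le, inv_div]
  set C' : ℝ := max C 0 with hC'def
  have hC'0 : 0 ≤ C' := le_max_right C 0
  have hC'lt : C' < (θ ^ p)⁻¹ := by
    rw [hconst] at hC
    exact max_lt hC (inv_pos.mpr hθppos)
  have hCθ : C' * θ ^ p < 1 := by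
    have h := mul_lt_mul_of_pos_right hC'lt hθppos
    rwa [inv_mul_cancel₀ hθppos.ne'] at h
  set H : ℕ → ℝ := fun K => ∑ i ∈ Finset.range K, 1 / ((i : ℝ) + 1) with hHdef
  have hHnonneg : ∀ K, 0 ≤ H K := fun K => Finset.sum_nonneg fun i _ => by positivity
  have hHmono : Monotone H := fun a b hab =>
    Finset.sum_le_sum_of_subset_of_nonneg (Finset.range_subset_range.mpr hab)
      (fun i _ _ => by positivity)
  obtain ⟨N, hN1, hHN⟩ : ∃ N : ℕ, 1 ≤ N ∧ 2 * C' < H N * (1 - C' * θ ^ p) := by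
    have ht := Real.tendsto_sum_range_one_div_nat_succ_atTop
    have h1 : ∀ᶠ (K : ℕ) in Filter.atTop, 2 * C' / (1 - C' * θ ^ p) < H K :=
      ht.eventually_gt_atTop _
    obtain ⟨N, hN⟩ := (h1.and (Filter.eventually_ge_atTop 1)).exists
    refine ⟨N, hN.2, ?_⟩
    have := hN.1
    rwa [div_lt_iff₀ (by linarith)] at this
  have hNR : (0:ℝ) < N := by exact_mod_cast Nat.pos_of_ne_zero (by omega)
  set ψ : ℕ → ℝ := hPsi p N with hψdef
  refine ⟨ψ, hPsi_zero p hp N, ?_, ?_⟩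
  · apply Set.Finite.subset (Set.finite_Iio (2 * N))
    intro n hn
    rw [Set.mem_Iio]
    by_contra h
    exact (Function.mem_support.mp hn) (hPsi_eq_zero p hp N n (by omega))
  -- main inequality
  set D : ℕ → ℝ := fun n => |ψ (n + 1) - ψ n| ^ p with hDdef
  set T : ℕ → ℝ := fun n =>
    max (⨆ m ∈ Set.Icc 1 (n + 1), |ψ m| ^ p / ((n : ℝ) + 1) ^ p)
      (⨆ m ∈ Set.Ici (n + 1), |ψ m| ^ p / (m : ℝ) ^ p) with hTdef
  show C * ∑' n, D n < ∑' n, T n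
  set K : ℝ := ((N : ℝ) ^ θ) ^ p with hKdef
  have hK0 : 0 ≤ K := by positivity
  have habs : ∀ m, |ψ m| ^ p ≤ K := by
    intro m
    refine Real.rpow_le_rpow (abs_nonneg _) ?_ hp0.le
    rw [abs_of_nonneg (hPsi_nonneg p N m)]
    exact hPsi_le p hp N m
  -- Part 1 : upper bound on the gradient sum
  have hDzero : ∀ n ∉ Finset.range (2 * N), D n = 0 := by
    intro n hn
    rw [Finset.mem_range, not_lt] at hn
    have h1 : ψ (n + 1) = 0 := hPsi_eq_zero p hp N _ (by omega)
    have h2 : ψ n = 0 := hPsi_eq_zero p hp N _ (by omega)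
    simp [hDdef, h1, h2, Real.zero_rpow hp0.ne']
  have htsumD : ∑' n, D n = ∑ n ∈ Finset.range (2 * N), D n := tsum_eq_sum hDzero
  have hsplit : ∑ n ∈ Finset.range (2 * N), D n
      = ∑ n ∈ Finset.range N, D n + ∑ n ∈ Finset.Ico N (2 * N), D n := by
    rw [Finset.range_eq_Ico, Finset.range_eq_Ico,
      Finset.sum_Ico_consecutive _ (Nat.zero_le N) (by omega)]
  have hB : ∑ n ∈ Finset.Ico N (2 * N), D n = 1 := by
    have hc : ∀ n ∈ Finset.Ico N (2 * N), D n = (N : ℝ)⁻¹ := by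
      intro n hn
      rw [Finset.mem_Ico] at hn
      have hstep := hPsi_step p N n hn.1 hn.2
      show |ψ (n + 1) - ψ n| ^ p = (N : ℝ)⁻¹
      rw [hstep, abs_neg, abs_of_nonneg (by positivity),
        Real.div_rpow (Real.rpow_nonneg hNR.le _) hNR.le, rpow_ratio p hp _ hNR, one_div]
    rw [Finset.sum_congr rfl hc, Finset.sum_const, Nat.card_Ico]
    have h2N : 2 * N - N = N := by omega
    rw [h2N, nsmul_eq_mul, mul_inv_cancel₀ hNR.ne']
  obtain ⟨N', hN'⟩ : ∃ N', N = N' + 1 := ⟨N - 1, by omega⟩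
  have hA : ∑ n ∈ Finset.range N, D n ≤ 1 + θ ^ p * H N := by
    conv_lhs => rw [hN', Finset.sum_range_succ']
    have hD0 : D 0 = 1 := by
      have h1 : ψ 1 = 1 := by
        rw [hψdef, hPsi_of_le p N 1 (by omega)]
        simp [Real.one_rpow]
      have h0 : ψ 0 = 0 := hPsi_zero p hp N
      simp [hDdef, h1, h0, Real.one_rpow]
    have hDi : ∀ i ∈ Finset.range N', D (i + 1) ≤ θ ^ p * (1 / ((i : ℝ) + 1)) := by
      intro i hi
      rw [Finset.mem_range] at hi
      have e1 : ψ (i + 1) = ((i : ℝ) + 1) ^ θ := by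
        rw [hψdef, hPsi_of_le p N _ (by omega)]; push_cast; rfl
      have e2 : ψ (i + 1 + 1) = ((i : ℝ) + 1 + 1) ^ θ := by
        rw [hψdef, hPsi_of_le p N _ (by omega)]; push_cast; rfl
      have hx1 : (1:ℝ) ≤ (i : ℝ) + 1 := by linarith [Nat.cast_nonneg (α := ℝ) i]
      have hd0 : 0 ≤ ((i : ℝ) + 1 + 1) ^ θ - ((i : ℝ) + 1) ^ θ :=
        sub_nonneg.mpr (Real.rpow_le_rpow (by positivity) (by linarith) hθ0.le)
      show |ψ (i + 1 + 1) - ψ (i + 1)| ^ p ≤ θ ^ p * (1 / ((i : ℝ) + 1))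
      rw [e1, e2, abs_of_nonneg hd0]
      exact grad_bound p hp _ hx1
    calc ∑ i ∈ Finset.range N', D (i + 1) + D 0
        ≤ ∑ i ∈ Finset.range N', θ ^ p * (1 / ((i : ℝ) + 1)) + 1 :=
          add_le_add (Finset.sum_le_sum hDi) hD0.le
      _ = θ ^ p * H N' + 1 := by rw [← Finset.mul_sum]
      _ ≤ 1 + θ ^ p * H N := by
          have h := mul_le_mul_of_nonneg_left (hHmono (by omega : N' ≤ N)) hθppos.le
          linarith
  have hDsum : ∑' n, D n ≤ 2 + θ ^ p * H N := by
    rw [htsumD, hsplit]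
    linarith
  -- Part 2 : lower bound on the Hardy sum
  have hfK : ∀ m : ℕ, 1 ≤ m → |ψ m| ^ p / (m : ℝ) ^ p ≤ K := by
    intro m hm
    have hb : (1:ℝ) ≤ (m : ℝ) ^ p :=
      Real.one_le_rpow (by exact_mod_cast hm) hp0.le
    exact (div_le_self (by positivity) hb).trans (habs m)
  have hTle : ∀ n : ℕ, T n ≤ K / ((n : ℝ) + 1) ^ p := by
    intro n
    have hpow : (0:ℝ) < ((n : ℝ) + 1) ^ p := by positivity
    apply max_le
    · refine Real.iSup_le (fun m => Real.iSup_le (fun hm => ?_) (by positivity)) (by positivity)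
      exact div_le_div₀ hK0 (habs m) hpow le_rfl
    · refine Real.iSup_le (fun m => Real.iSup_le (fun hm => ?_) (by positivity)) (by positivity)
      rw [Set.mem_Ici] at hm
      have hm' : ((n : ℝ) + 1) ≤ (m : ℝ) := by exact_mod_cast hm
      exact div_le_div₀ hK0 (habs m) hpow (Real.rpow_le_rpow (by positivity) hm' hp0.le)
  have hTnonneg : ∀ n, 0 ≤ T n := fun n =>
    le_trans (Real.iSup_nonneg fun m => Real.iSup_nonneg fun _ => by positivity)
      (le_max_left _ _)
  have hTsummable : Summable T := by
    have hs : Summable (fun n : ℕ => K * (1 / (n : ℝ) ^ p)) :=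
      (Real.summable_one_div_nat_rpow.mpr hp).mul_left K
    have hs1 : Summable (fun n : ℕ => K * (1 / ((↑(n + 1) : ℝ)) ^ p)) :=
      (summable_nat_add_iff (f := fun n : ℕ => K * (1 / (n : ℝ) ^ p)) 1).mpr hs
    refine Summable.of_nonneg_of_le hTnonneg (fun n => ?_) hs1
    calc T n ≤ K / ((n : ℝ) + 1) ^ p := hTle n
      _ = K * (1 / ((↑(n + 1) : ℝ)) ^ p) := by push_cast; ring
  have hTlower : ∀ i ∈ Finset.range N, 1 / ((i : ℝ) + 1) ≤ T i := by
    intro i hi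
    rw [Finset.mem_range] at hi
    refine le_trans ?_ (le_max_right _ _)
    set g : ℕ → ℝ := fun m => ⨆ (_ : m ∈ Set.Ici (i + 1)), |ψ m| ^ p / (m : ℝ) ^ p with hg
    have hbdd : BddAbove (Set.range g) := by
      refine ⟨K, ?_⟩
      rintro _ ⟨m, rfl⟩
      exact Real.iSup_le (fun hm => hfK m (by rw [Set.mem_Ici] at hm; omega)) hK0
    have hval : 1 / ((i : ℝ) + 1) = |ψ (i + 1)| ^ p / ((↑(i + 1) : ℝ)) ^ p := by
      rw [hψdef, hPsi_of_le p N (i + 1) (by omega),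
        abs_of_nonneg (Real.rpow_nonneg (Nat.cast_nonneg _) _),
        rpow_ratio p hp _ (by positivity)]
      push_cast
      ring
    calc 1 / ((i : ℝ) + 1) = g (i + 1) := by
          rw [hg]
          simp only []
          rw [ciSup_pos (Set.mem_Ici.mpr le_rfl)]
          exact hval
      _ ≤ ⨆ m, g m := le_ciSup hbdd (i + 1)
  have hTsum : H N ≤ ∑' n, T n :=
    le_trans (Finset.sum_le_sum hTlower)
      (hTsummable.sum_le_tsum _ (fun i _ => hTnonneg i))
  -- combine
  have hD_nonneg : 0 ≤ ∑' n, D n := tsum_nonneg fun n => by positivity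
  calc C * ∑' n, D n ≤ C' * ∑' n, D n :=
        mul_le_mul_of_nonneg_right (le_max_left C 0) hD_nonneg
    _ ≤ C' * (2 + θ ^ p * H N) := mul_le_mul_of_nonneg_left hDsum hC'0
    _ < H N := by nlinarith [hHnonneg N]
    _ ≤ ∑' n, T n := hTsum
end

section
/- Let 1 < p, q < ∞ with 1/p + 1/q = 1 and let ψ : ℕ∪{0} → ℝ have finite support with ψ(0) = 0. Then ((p−1)/p) · max{ ∑_{n=1}^∞ sup_{1 ≤ m ≤ n} |ψ(m)|^p , ∑_{n=1}^∞ sup_{n ≤ m < ∞} |ψ(m)|^p } ≤ ( ∑_{n=1}^∞ |∇ψ(n)|^p )^{1/p} · max{ ( ∑_{n=1}^∞ sup_{1 ≤ m ≤ n} n^q |ψ(m)|^p )^{1/q} , ( ∑_{n=1}^∞ sup_{n ≤ m < ∞} m^q |ψ(m)|^p )^{1/q} }, where ∇ψ(n) := ψ(n) − ψ(n−1). -/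
open Real

private lemma iSup_prop_le {P : Prop} {a b : ℝ} (h : P → a ≤ b) (hb : 0 ≤ b) :
    (⨆ _ : P, a) ≤ b := by
  by_cases hP : P
  · simpa [ciSup_pos hP] using h hP
  · simp [hP, Real.iSup_of_isEmpty, hb]

private lemma biSup_le_of_nonneg {f : ℕ → ℝ} {s : Set ℕ} {b : ℝ} (hb : 0 ≤ b)
    (h : ∀ m ∈ s, f m ≤ b) : (⨆ m ∈ s, f m) ≤ b :=
  Real.iSup_le (fun m => iSup_prop_le (h m) hb) hb

private lemma biSup_eq_max {f : ℕ → ℝ} {s : Set ℕ} {m₀ : ℕ} (hf : 0 ≤ f m₀) (hm₀ : m₀ ∈ s)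
    (hmax : ∀ m ∈ s, f m ≤ f m₀) : (⨆ m ∈ s, f m) = f m₀ := by
  apply le_antisymm (biSup_le_of_nonneg hf hmax)
  have h1 : f m₀ = ⨆ _ : m₀ ∈ s, f m₀ := (ciSup_pos (p := m₀ ∈ s) (f := fun _ => f m₀) hm₀).symm
  rw [h1]
  apply le_ciSup (f := fun m => ⨆ _ : m ∈ s, f m)
  refine ⟨f m₀, ?_⟩
  rintro x ⟨m, rfl⟩
  exact iSup_prop_le (hmax m) hf

/-- attainment of max on `Ici k` for a function vanishing from `M` on -/
private lemma exists_max_Ici {f : ℕ → ℝ} {M : ℕ} (hM : ∀ m, M ≤ m → f m = 0) (k : ℕ) :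
    ∃ m₀, k ≤ m₀ ∧ ∀ m, k ≤ m → f m ≤ f m₀ := by
  obtain ⟨m₀, hm₀, hmax⟩ := (Finset.Icc k (max k M)).exists_max_image f
    ⟨k, by simp [Finset.mem_Icc, le_max_left]⟩
  rw [Finset.mem_Icc] at hm₀
  refine ⟨m₀, hm₀.1, fun m hm => ?_⟩
  by_cases hmM : m ≤ max k M
  · exact hmax m (Finset.mem_Icc.2 ⟨hm, hmM⟩)
  · have h0 : f m = 0 := hM m (le_trans (le_max_right k M) (le_of_not_ge hmM))
    have : f (max k M) ≤ f m₀ := hmax _ (Finset.mem_Icc.2 ⟨le_max_left _ _, le_refl _⟩)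
    rcases le_or_gt M k with h | h
    · have : f k ≤ f m₀ := hmax k (Finset.mem_Icc.2 ⟨le_refl _, le_max_left _ _⟩)
      rw [h0]; exact le_trans (le_of_eq (hM k h).symm) this
    · rw [h0]
      have hMk : max k M = M := max_eq_right h.le
      rw [hMk] at this
      exact le_trans (le_of_eq (hM M le_rfl).symm) this

/-- key scalar inequality: for `q > 1` and `0 < u ≤ 1`, `u ≤ u^(q²) + (q-1)`. -/
private lemma key_scalar {q u : ℝ} (hq : 1 < q) (hu0 : 0 < u) (hu1 : u ≤ 1) :
    u ≤ u ^ (q * q) + (q - 1) := by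
  have hq0 : 0 < q := lt_trans one_pos hq
  have hc1 : 1 ≤ q * q := one_le_mul_of_one_le_of_one_le hq.le hq.le
  rcases le_or_gt (q + 1) (q * q) with hcase | hcase
  · have hbern : 1 + (q * q) * (u - 1) ≤ u ^ (q * q) := by
      have := one_add_mul_self_le_rpow_one_add (s := u - 1) (by linarith) hc1
      simpa using this
    rcases le_or_gt (u * (q * q)) (q * q - 1) with hu | hu
    · have h1 : 0 ≤ u ^ (q * q) := Real.rpow_nonneg hu0.le _
      have h2 : u * (q * q) ≤ (q - 1) * (q * q) := by nlinarith
      nlinarith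
    · nlinarith
  · have he : (2.7 : ℝ) < Real.exp 1 := by
      have := Real.exp_one_gt_d9; norm_num at this ⊢; linarith
    have hqsmall : q + 1 < Real.exp 1 := by nlinarith
    obtain ⟨c, hc⟩ : ∃ c, c = q * q - 1 := ⟨_, rfl⟩
    have hc0 : 0 < c := by nlinarith
    have hlogu : Real.log u ≤ 0 := Real.log_nonpos hu0.le hu1
    have h1 : 1 + c * Real.log u ≤ u ^ c := by
      rw [Real.rpow_def_of_pos hu0]
      have := Real.add_one_le_exp (c * Real.log u)
      rw [mul_comm c (Real.log u)] at this ⊢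
      linarith
    have h2 : u * (-Real.log u) ≤ 1 / Real.exp 1 := by
      rcases eq_or_lt_of_le hu1 with rfl | hu1'
      · simp [Real.log_one]; positivity
      · have hinv : 0 < u⁻¹ := inv_pos.2 hu0
        have hlog : Real.log u⁻¹ ≤ u⁻¹ / Real.exp 1 := by
          have h3 : Real.log (u⁻¹ / Real.exp 1) ≤ u⁻¹ / Real.exp 1 - 1 :=
            Real.log_le_sub_one_of_pos (by positivity)
          rw [Real.log_div (ne_of_gt hinv) (ne_of_gt (Real.exp_pos 1)), Real.log_exp] at h3
          linarith
        rw [Real.log_inv] at hlog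
        calc u * (-Real.log u) ≤ u * (u⁻¹ / Real.exp 1) := by
              apply mul_le_mul_of_nonneg_left hlog hu0.le
          _ = 1 / Real.exp 1 := by field_simp
    have hsplit : u ^ (q * q) = u * u ^ c := by
      rw [← Real.rpow_one_add' hu0.le (by nlinarith)]
      congr 1
      rw [hc]; ring
    have h4 : u - u ^ (q * q) ≤ c * (u * (-Real.log u)) := by
      rw [hsplit]
      have : 1 - u ^ c ≤ c * (-Real.log u) := by linarith
      calc u - u * u ^ c = u * (1 - u ^ c) := by ring
        _ ≤ u * (c * (-Real.log u)) := mul_le_mul_of_nonneg_left this hu0.le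
        _ = c * (u * (-Real.log u)) := by ring
    have h5 : c * (u * (-Real.log u)) ≤ c * (1 / Real.exp 1) := by
      apply mul_le_mul_of_nonneg_left h2 hc0.le
    have h6 : c * (1 / Real.exp 1) ≤ q - 1 := by
      rw [hc, mul_one_div, div_le_iff₀ (Real.exp_pos 1)]
      nlinarith [Real.exp_pos 1]
    linarith

/-- r-version: for conjugates `p,q` and `0 < r ≤ 1`: `r^(p-1) ≤ r^(p+q) + (q-1)`. -/
private lemma key_r {p q r : ℝ} (hp : 1 < p) (hq : 1 < q) (hpq : 1 / p + 1 / q = 1)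
    (hr0 : 0 < r) (hr1 : r ≤ 1) : r ^ (p - 1) ≤ r ^ (p + q) + (q - 1) := by
  have hp0 : 0 < p := lt_trans one_pos hp
  have hq0 : 0 < q := lt_trans one_pos hq
  have hmul : p + q = p * q := by field_simp at hpq; linarith
  have hpq' : (p - 1) * q = p := by field_simp at hpq; nlinarith
  have hu0 : 0 < r ^ (p - 1) := Real.rpow_pos_of_pos hr0 _
  have hu1 : r ^ (p - 1) ≤ 1 := Real.rpow_le_one hr0.le hr1 (by linarith)
  have := key_scalar hq hu0 hu1
  have hrw : (r ^ (p - 1)) ^ (q * q) = r ^ (p + q) := by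
    rw [← Real.rpow_mul hr0.le]
    congr 1
    nlinarith
  rwa [hrw] at this

private lemma climb_pow {p q : ℝ} (hp : 1 < p) (hq : 1 < q) (hpq : 1 / p + 1 / q = 1)
    (d : ℕ → ℝ) (hd : ∀ k, 0 ≤ d k) (m : ℕ) :
    (∑ k ∈ Finset.range m, d k) ^ p ≤ (m : ℝ) ^ (p - 1) * ∑ k ∈ Finset.range m, d k ^ p := by
  have hp0 : (0:ℝ) < p := lt_trans one_pos hp
  have hq0 : (0:ℝ) < q := lt_trans one_pos hq
  have hconj : p.HolderConjugate q := ⟨by simpa [one_div] using hpq, hp0, hq0⟩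
  have hH := Real.inner_le_Lp_mul_Lq (Finset.range m) d (fun _ => 1) hconj
  simp only [mul_one, abs_one, Real.one_rpow, Finset.sum_const, Finset.card_range,
    nsmul_eq_mul] at hH
  have habs : ∀ k, |d k| = d k := fun k => abs_of_nonneg (hd k)
  simp only [habs] at hH
  have hsumd : 0 ≤ ∑ k ∈ Finset.range m, d k := Finset.sum_nonneg fun k _ => hd k
  have hsumdp : 0 ≤ ∑ k ∈ Finset.range m, d k ^ p :=
    Finset.sum_nonneg fun k _ => Real.rpow_nonneg (hd k) p
  have h2 := Real.rpow_le_rpow hsumd hH hp0.le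
  refine h2.trans (le_of_eq ?_)
  rw [Real.mul_rpow (Real.rpow_nonneg hsumdp _) (Real.rpow_nonneg (Nat.cast_nonneg m) _),
    ← Real.rpow_mul hsumdp, ← Real.rpow_mul (Nat.cast_nonneg m)]
  have e1 : 1/p*p = 1 := by field_simp
  have e2 : 1/q*p = p - 1 := by
    have h1 : 1/q = 1 - 1/p := by linarith
    rw [h1]; field_simp
  rw [e1, e2, Real.rpow_one]
  ring

/-- **Discrete uncertainty principle.** Here `ψ : ℕ → ℝ` is a finitely supported
function on `ℕ ∪ {0}` with `ψ 0 = 0`, and `∇ψ(n) = ψ(n) - ψ(n-1)`. The sums over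
positive integers `n` are written with `n = n' + 1` for `n' : ℕ`; the inner
suprema range over `1 ≤ m ≤ n` (`Set.Icc 1 (n'+1)`) and `n ≤ m < ∞`
(`Set.Ici (n'+1)`) respectively, and `1 < p, q < ∞` are Hölder conjugate. -/
theorem discrete_uncertainty_principle (p q : ℝ) (hp : 1 < p) (hq : 1 < q)
    (hpq : 1 / p + 1 / q = 1)
    (ψ : ℕ → ℝ) (hψ0 : ψ 0 = 0) (hψ : (Function.support ψ).Finite) :
    ((p - 1) / p) *
        max (∑' n : ℕ, ⨆ m ∈ Set.Icc 1 (n + 1), |ψ m| ^ p)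
            (∑' n : ℕ, ⨆ m ∈ Set.Ici (n + 1), |ψ m| ^ p)
      ≤ (∑' n : ℕ, |ψ (n + 1) - ψ n| ^ p) ^ (1 / p) *
        max ((∑' n : ℕ, ⨆ m ∈ Set.Icc 1 (n + 1), ((n : ℝ) + 1) ^ q * |ψ m| ^ p) ^ (1 / q))
            ((∑' n : ℕ, ⨆ m ∈ Set.Ici (n + 1), (m : ℝ) ^ q * |ψ m| ^ p) ^ (1 / q)) := by
  classical
  have hp0 : (0:ℝ) < p := lt_trans one_pos hp
  have hq0 : (0:ℝ) < q := lt_trans one_pos hq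
  have hpne : p ≠ 0 := ne_of_gt hp0
  have hA0 : ∀ m : ℕ, 0 ≤ |ψ m| ^ p := fun m => Real.rpow_nonneg (abs_nonneg _) _
  by_cases hzero : ∀ m, ψ m = 0
  · -- trivial case ψ ≡ 0
    have hz : ∀ m : ℕ, |ψ m| ^ p = (0:ℝ) := fun m => by
      rw [hzero m, abs_zero, Real.zero_rpow hpne]
    have hsup1 : ∀ n : ℕ, (⨆ m ∈ Set.Icc 1 (n + 1), |ψ m| ^ p) = 0 := by
      intro n
      have h := biSup_eq_max (f := fun m => |ψ m| ^ p) (s := Set.Icc 1 (n+1)) (m₀ := 1)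
        (hA0 1) (Set.mem_Icc.2 ⟨le_refl 1, by omega⟩)
        (fun m _ => by show |ψ m| ^ p ≤ |ψ 1| ^ p; rw [hz m, hz 1])
      rw [h]; exact hz 1
    have hsup2 : ∀ n : ℕ, (⨆ m ∈ Set.Ici (n + 1), |ψ m| ^ p) = 0 := by
      intro n
      have h := biSup_eq_max (f := fun m => |ψ m| ^ p) (s := Set.Ici (n+1)) (m₀ := n+1)
        (hA0 _) (Set.mem_Ici.2 le_rfl)
        (fun m _ => by show |ψ m| ^ p ≤ |ψ (n+1)| ^ p; rw [hz m, hz (n+1)])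
      rw [h]; exact hz (n+1)
    have hsup3 : ∀ n : ℕ, (⨆ m ∈ Set.Icc 1 (n + 1), ((n : ℝ) + 1) ^ q * |ψ m| ^ p) = 0 := by
      intro n
      have h := biSup_eq_max (f := fun m => ((n : ℝ) + 1) ^ q * |ψ m| ^ p)
        (s := Set.Icc 1 (n+1)) (m₀ := 1)
        (mul_nonneg (Real.rpow_nonneg (by positivity) _) (hA0 1))
        (Set.mem_Icc.2 ⟨le_refl 1, by omega⟩)
        (fun m _ => by
          show ((n : ℝ) + 1) ^ q * |ψ m| ^ p ≤ ((n : ℝ) + 1) ^ q * |ψ 1| ^ p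
          rw [hz m, hz 1])
      rw [h]
      show ((n : ℝ) + 1) ^ q * |ψ 1| ^ p = 0
      rw [hz 1, mul_zero]
    have hsup4 : ∀ n : ℕ, (⨆ m ∈ Set.Ici (n + 1), (m : ℝ) ^ q * |ψ m| ^ p) = 0 := by
      intro n
      have h := biSup_eq_max (f := fun m => (m : ℝ) ^ q * |ψ m| ^ p)
        (s := Set.Ici (n+1)) (m₀ := n+1)
        (mul_nonneg (Real.rpow_nonneg (by positivity) _) (hA0 _))
        (Set.mem_Ici.2 le_rfl)
        (fun m _ => by
          show (m : ℝ) ^ q * |ψ m| ^ p ≤ ((n+1 : ℕ) : ℝ) ^ q * |ψ (n+1)| ^ p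
          rw [hz m, hz (n+1), mul_zero, mul_zero])
      rw [h]
      show ((n+1 : ℕ) : ℝ) ^ q * |ψ (n+1)| ^ p = 0
      rw [hz (n+1), mul_zero]
    rw [tsum_congr hsup1, tsum_congr hsup2, tsum_congr hsup3, tsum_congr hsup4, tsum_zero]
    have hqq : (1:ℝ)/q ≠ 0 := by positivity
    simp only [max_self, mul_zero]
    have h1 : (0:ℝ) ^ (1/q) = 0 := Real.zero_rpow hqq
    rw [h1]
    have h2 : (0:ℝ) ≤ (∑' (n:ℕ), |ψ (n + 1) - ψ n| ^ p) ^ (1/p) :=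
      Real.rpow_nonneg (tsum_nonneg fun n => Real.rpow_nonneg (abs_nonneg _) _) _
    simpa using h2
  · -- main case: ψ ≢ 0
    push_neg at hzero
    obtain ⟨m₁, hm₁⟩ := hzero
    have hm₁1 : 1 ≤ m₁ := by
      rcases Nat.eq_zero_or_pos m₁ with h | h
      · exact absurd (h ▸ hψ0) hm₁
      · exact h
    obtain ⟨M₀, hM₀⟩ := hψ.bddAbove
    set M := M₀ + 1 with hMdef
    have hM : ∀ m, M ≤ m → ψ m = 0 := by
      intro m hm
      by_contra h
      have h2 : m ≤ M₀ := hM₀ (Function.mem_support.2 h)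
      omega
    have hAM : ∀ m, M ≤ m → |ψ m| ^ p = 0 := fun m hm => by
      rw [hM m hm, abs_zero, Real.zero_rpow hpne]
    have hWM : ∀ m, M ≤ m → (m:ℝ) ^ q * |ψ m| ^ p = 0 := fun m hm => by
      rw [hM m hm, abs_zero, Real.zero_rpow hpne, mul_zero]
    have hW0 : ∀ m : ℕ, 0 ≤ (m:ℝ) ^ q * |ψ m| ^ p := fun m =>
      mul_nonneg (Real.rpow_nonneg (Nat.cast_nonneg m) _) (hA0 m)
    choose μ hμ1 hμ2 using fun k => exists_max_Ici (f := fun m => |ψ m| ^ p) hAM k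
    choose ν hν1 hν2 using fun k => exists_max_Ici (f := fun m => (m:ℝ) ^ q * |ψ m| ^ p) hWM k
    -- NP k = sup_{m ≥ k} |ψ m|^p ; CK k = sup_{m ≥ k} m^q |ψ m|^p
    set NP : ℕ → ℝ := fun k => |ψ (μ k)| ^ p with hNPdef
    set CK : ℕ → ℝ := fun k => ((ν k : ℕ):ℝ) ^ q * |ψ (ν k)| ^ p with hCKdef
    have hμ2' : ∀ k m : ℕ, k ≤ m → |ψ m| ^ p ≤ NP k := fun k m h => hμ2 k m h
    have hν2' : ∀ k m : ℕ, k ≤ m → (m:ℝ) ^ q * |ψ m| ^ p ≤ CK k := fun k m h => hν2 k m h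
    have hsupA : ∀ k : ℕ, (⨆ m ∈ Set.Ici k, |ψ m| ^ p) = NP k := fun k =>
      biSup_eq_max (hA0 _) (Set.mem_Ici.2 (hμ1 k)) (fun m hm => hμ2 k m (Set.mem_Ici.1 hm))
    have hsupW : ∀ k : ℕ, (⨆ m ∈ Set.Ici k, (m:ℝ) ^ q * |ψ m| ^ p) = CK k := fun k =>
      biSup_eq_max (hW0 _) (Set.mem_Ici.2 (hν1 k)) (fun m hm => hν2 k m (Set.mem_Ici.1 hm))
    have hNP0 : ∀ k, 0 ≤ NP k := fun k => hA0 _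
    have hCK0 : ∀ k, 0 ≤ CK k := fun k => hW0 _
    have hNPle : ∀ k j : ℕ, k ≤ j → NP j ≤ NP k := fun k j hkj =>
      hμ2 k (μ j) (le_trans hkj (hμ1 j))
    have hNPM : ∀ k : ℕ, M ≤ k → NP k = 0 := fun k hk => hAM _ (le_trans hk (hμ1 k))
    have hCKM : ∀ k : ℕ, M ≤ k → CK k = 0 := fun k hk => hWM _ (le_trans hk (hν1 k))
    have hF1 : ∀ k m : ℕ, k ≤ m → (m:ℝ) ^ q * NP m ≤ CK k := by
      intro k m hkm
      have h1 : (m:ℝ) ^ q * NP m ≤ ((μ m : ℕ):ℝ) ^ q * NP m :=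
        mul_le_mul_of_nonneg_right
          (Real.rpow_le_rpow (Nat.cast_nonneg m) (Nat.cast_le.2 (hμ1 m)) hq0.le) (hNP0 m)
      exact h1.trans (hν2 k (μ m) (le_trans hkm (hμ1 m)))
    -- the three series
    set G := ∑' (n:ℕ), |ψ (n + 1) - ψ n| ^ p with hGdef
    set B := ∑' (n:ℕ), NP (n + 1) with hBdef
    set C := ∑' (n:ℕ), CK (n + 1) with hCdef
    have hT2 : (∑' (n:ℕ), ⨆ m ∈ Set.Ici (n + 1), |ψ m| ^ p) = B :=
      tsum_congr fun n => hsupA (n+1)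
    have hX2 : (∑' (n:ℕ), ⨆ m ∈ Set.Ici (n + 1), (m:ℝ) ^ q * |ψ m| ^ p) = C :=
      tsum_congr fun n => hsupW (n+1)
    have hGfin : ∀ K : ℕ, M ≤ K → G = ∑ n ∈ Finset.range K, |ψ (n + 1) - ψ n| ^ p := by
      intro K hK
      apply tsum_eq_sum
      intro n hn
      have hn' : M ≤ n := le_trans hK (le_of_not_gt (fun h => hn (Finset.mem_range.2 h)))
      rw [hM (n+1) (by omega), hM n hn', sub_zero, abs_zero, Real.zero_rpow hpne]
    have hBfin : ∀ K : ℕ, M ≤ K → B = ∑ n ∈ Finset.range K, NP (n + 1) := by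
      intro K hK
      apply tsum_eq_sum
      intro n hn
      have hn' : M ≤ n := le_trans hK (le_of_not_gt (fun h => hn (Finset.mem_range.2 h)))
      exact hNPM (n+1) (by omega)
    have hCfin : ∀ K : ℕ, M ≤ K → C = ∑ n ∈ Finset.range K, CK (n + 1) := by
      intro K hK
      apply tsum_eq_sum
      intro n hn
      have hn' : M ≤ n := le_trans hK (le_of_not_gt (fun h => hn (Finset.mem_range.2 h)))
      exact hCKM (n+1) (by omega)
    -- positivity
    have hApos : 0 < |ψ m₁| ^ p := Real.rpow_pos_of_pos (abs_pos.2 hm₁) _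
    have hNP1pos : 0 < NP 1 := lt_of_lt_of_le hApos (hμ2 1 m₁ hm₁1)
    set ms := μ 1 with hmsdef
    have hms1 : 1 ≤ ms := hμ1 1
    have hmspos : (0:ℝ) < (ms:ℝ) := by exact_mod_cast hms1
    have hNP1eq : NP 1 = |ψ ms| ^ p := rfl
    have hmsM : ms < M := by
      by_contra h
      push_neg at h
      exact absurd (hNP1eq ▸ hAM ms h) (ne_of_gt hNP1pos)
    have hGpos : 0 < G := by
      have hne : ∃ k, k < ms ∧ ψ (k+1) ≠ ψ k := by
        by_contra h
        push_neg at h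
        have hconst : ∀ k, k ≤ ms → ψ k = 0 := by
          intro k
          induction k with
          | zero => intro _; exact hψ0
          | succ k ih => intro hk; rw [h k (by omega)]; exact ih (by omega)
        have hz : ψ ms = 0 := hconst ms le_rfl
        rw [hNP1eq, hz, abs_zero, Real.zero_rpow hpne] at hNP1pos
        exact lt_irrefl 0 hNP1pos
      obtain ⟨k, hkms, hkne⟩ := hne
      rw [hGfin M le_rfl]
      have hkM : k < M := by omega
      refine lt_of_lt_of_le ?_ (Finset.single_le_sum
        (fun i _ => Real.rpow_nonneg (abs_nonneg (ψ (i+1) - ψ i)) p)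
        (Finset.mem_range.2 hkM))
      exact Real.rpow_pos_of_pos (abs_pos.2 (sub_ne_zero.2 hkne)) _
    have hclimb : NP 1 ≤ (ms:ℝ) ^ (p - 1) * G := by
      have htel : |ψ ms| ≤ ∑ k ∈ Finset.range ms, |ψ (k + 1) - ψ k| := by
        have h := Finset.sum_range_sub ψ ms
        calc |ψ ms| = |∑ k ∈ Finset.range ms, (ψ (k + 1) - ψ k)| := by
              rw [h, hψ0, sub_zero]
          _ ≤ ∑ k ∈ Finset.range ms, |ψ (k + 1) - ψ k| := Finset.abs_sum_le_sum_abs _ _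
      have h2 : |ψ ms| ^ p ≤ (∑ k ∈ Finset.range ms, |ψ (k + 1) - ψ k|) ^ p :=
        Real.rpow_le_rpow (abs_nonneg _) htel hp0.le
      have h3 := climb_pow hp hq hpq (fun k => |ψ (k + 1) - ψ k|) (fun k => abs_nonneg _) ms
      have h4 : ∑ k ∈ Finset.range ms, |ψ (k + 1) - ψ k| ^ p ≤ G := by
        rw [hGfin M le_rfl]
        exact Finset.sum_le_sum_of_subset_of_nonneg (Finset.range_subset_range.2 hmsM.le)
          (fun i _ _ => Real.rpow_nonneg (abs_nonneg _) _)
      calc NP 1 = |ψ ms| ^ p := hNP1eq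
        _ ≤ (ms:ℝ) ^ (p - 1) * ∑ k ∈ Finset.range ms, |ψ (k + 1) - ψ k| ^ p := h2.trans h3
        _ ≤ (ms:ℝ) ^ (p - 1) * G :=
            mul_le_mul_of_nonneg_left h4 (Real.rpow_nonneg hmspos.le _)
    have hCpos : 0 < C := by
      have h1 : (ms:ℝ) ^ q * |ψ ms| ^ p ≤ CK 1 := hν2 1 ms hms1
      have h2 : 0 < (ms:ℝ) ^ q * |ψ ms| ^ p :=
        mul_pos (Real.rpow_pos_of_pos hmspos _) (hNP1eq ▸ hNP1pos)
      rw [hCfin M le_rfl]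
      refine lt_of_lt_of_le (h2.trans_le h1) (Finset.single_le_sum
        (fun i _ => hCK0 (i+1)) (Finset.mem_range.2 (by omega)))
    -- main per-t estimate
    have key : ∀ t : ℝ, 0 < t → B ≤ (q - 1) * t ^ p * G + t ^ (-q) * C := by
      intro t ht
      set T := ⌊t⌋₊ with hTdef
      set K := max M (T + 1) with hKdef
      have hMK : M ≤ K := le_max_left _ _
      have hTK : T + 1 ≤ K := le_max_right _ _
      have htq0 : (0:ℝ) ≤ t ^ (-q) := Real.rpow_nonneg ht.le _
      have htqpos : (0:ℝ) < t ^ q := Real.rpow_pos_of_pos ht _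
      have hsplit : ∑ n ∈ Finset.range K, NP (n + 1)
          = ∑ n ∈ Finset.range T, NP (n + 1) + ∑ n ∈ Finset.Ico T K, NP (n + 1) := by
        rw [Finset.range_eq_Ico, Finset.range_eq_Ico, Finset.sum_Ico_consecutive _ (Nat.zero_le T) (by omega)]
      have hCsplit : ∑ n ∈ Finset.range K, CK (n + 1)
          = ∑ n ∈ Finset.range T, CK (n + 1) + ∑ n ∈ Finset.Ico T K, CK (n + 1) := by
        rw [Finset.range_eq_Ico, Finset.range_eq_Ico, Finset.sum_Ico_consecutive _ (Nat.zero_le T) (by omega)]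
      have piece1 : ∑ n ∈ Finset.Ico T K, NP (n + 1)
          ≤ t ^ (-q) * ∑ n ∈ Finset.Ico T K, CK (n + 1) := by
        rw [Finset.mul_sum]
        refine Finset.sum_le_sum ?_
        intro n hn
        have hTn : T ≤ n := (Finset.mem_Ico.1 hn).1
        have htn : t ≤ ((n + 1 : ℕ) : ℝ) := by
          have h1 : t < (T:ℝ) + 1 := Nat.lt_floor_add_one t
          have h2 : (T:ℝ) + 1 ≤ ((n + 1 : ℕ) : ℝ) := by
            push_cast
            have : (T:ℝ) ≤ (n:ℝ) := Nat.cast_le.2 hTn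
            linarith
          linarith
        have h1 : (1:ℝ) ≤ t ^ (-q) * ((n + 1 : ℕ) : ℝ) ^ q := by
          rw [Real.rpow_neg ht.le, inv_mul_eq_div, le_div_iff₀ htqpos, one_mul]
          exact Real.rpow_le_rpow ht.le htn hq0.le
        calc NP (n + 1) = 1 * NP (n + 1) := (one_mul _).symm
          _ ≤ (t ^ (-q) * ((n + 1 : ℕ) : ℝ) ^ q) * NP (n + 1) :=
              mul_le_mul_of_nonneg_right h1 (hNP0 _)
          _ = t ^ (-q) * (((n + 1 : ℕ) : ℝ) ^ q * NP (n + 1)) := by ring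
          _ ≤ t ^ (-q) * CK (n + 1) :=
              mul_le_mul_of_nonneg_left (hF1 (n+1) (n+1) le_rfl) htq0
      have piece2 : ∑ n ∈ Finset.range T, NP (n + 1)
          ≤ (q - 1) * t ^ p * G + t ^ (-q) * ∑ n ∈ Finset.range T, CK (n + 1) := by
        have hGterm : 0 ≤ (q - 1) * t ^ p * G :=
          mul_nonneg (mul_nonneg (by linarith) (Real.rpow_nonneg ht.le _)) hGpos.le
        rcases le_or_gt ms T with hb | ha
        · -- case (b) : ms ≤ T
          have h0 : ∑ n ∈ Finset.range T, NP (n + 1) ≤ (T:ℝ) * NP 1 := by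
            calc ∑ n ∈ Finset.range T, NP (n + 1)
                ≤ ∑ _n ∈ Finset.range T, NP 1 :=
                  Finset.sum_le_sum (fun n _ => hNPle 1 (n+1) (by omega))
              _ = (T:ℝ) * NP 1 := by
                  rw [Finset.sum_const, Finset.card_range, nsmul_eq_mul]
          have h1 : (T:ℝ) * NP 1 ≤ t * NP 1 :=
            mul_le_mul_of_nonneg_right (Nat.floor_le ht.le) (hNP0 1)
          have hts : (ms:ℝ) ≤ t := le_trans (by exact_mod_cast hb) (Nat.floor_le ht.le)
          have hr0 : 0 < (ms:ℝ) / t := div_pos hmspos ht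
          have hr1 : (ms:ℝ) / t ≤ 1 := (div_le_one ht).2 hts
          have hkr := key_r hp hq hpq hr0 hr1
          have e1 : ((ms:ℝ) / t) ^ (p - 1) * (t ^ p * (ms:ℝ) ^ (1 - p)) = t := by
            rw [Real.div_rpow hmspos.le ht.le]
            rw [show (ms:ℝ) ^ (p-1) / t ^ (p-1) * (t ^ p * (ms:ℝ) ^ (1-p))
              = ((ms:ℝ) ^ (p-1) * (ms:ℝ) ^ (1-p)) * (t ^ p / t ^ (p-1)) by ring]
            rw [← Real.rpow_add hmspos, ← Real.rpow_sub ht]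
            rw [show (p-1) + (1-p) = 0 by ring, show p - (p-1) = 1 by ring]
            rw [Real.rpow_zero, Real.rpow_one, one_mul]
          have e2 : ((ms:ℝ) / t) ^ (p + q) * (t ^ p * (ms:ℝ) ^ (1 - p))
              = t ^ (-q) * (ms:ℝ) ^ (q + 1) := by
            rw [Real.div_rpow hmspos.le ht.le]
            rw [show (ms:ℝ) ^ (p+q) / t ^ (p+q) * (t ^ p * (ms:ℝ) ^ (1-p))
              = ((ms:ℝ) ^ (p+q) * (ms:ℝ) ^ (1-p)) * (t ^ p / t ^ (p+q)) by ring]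
            rw [← Real.rpow_add hmspos, ← Real.rpow_sub ht]
            rw [show (p+q) + (1-p) = q + 1 by ring, show p - (p+q) = -q by ring]
            ring
          have hmul0 : 0 ≤ t ^ p * (ms:ℝ) ^ (1 - p) :=
            mul_nonneg (Real.rpow_nonneg ht.le _) (Real.rpow_nonneg hmspos.le _)
          have hineq : t ≤ t ^ (-q) * (ms:ℝ) ^ (q + 1) + (q - 1) * (t ^ p * (ms:ℝ) ^ (1 - p)) := by
            have h := mul_le_mul_of_nonneg_right hkr hmul0
            rw [add_mul, e2] at h
            rw [e1] at h
            exact h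
          have hineq2 : t * NP 1 ≤ t ^ (-q) * ((ms:ℝ) ^ (q + 1) * NP 1)
              + (q - 1) * t ^ p * ((ms:ℝ) ^ (1 - p) * NP 1) := by
            have h := mul_le_mul_of_nonneg_right hineq (hNP0 1)
            calc t * NP 1 ≤ (t ^ (-q) * (ms:ℝ) ^ (q + 1) + (q - 1) * (t ^ p * (ms:ℝ) ^ (1 - p))) * NP 1 := h
              _ = t ^ (-q) * ((ms:ℝ) ^ (q + 1) * NP 1)
                  + (q - 1) * t ^ p * ((ms:ℝ) ^ (1 - p) * NP 1) := by ring
          have hclimb' : (ms:ℝ) ^ (1 - p) * NP 1 ≤ G := by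
            have h := mul_le_mul_of_nonneg_left hclimb (Real.rpow_nonneg hmspos.le (1 - p))
            rwa [← mul_assoc, ← Real.rpow_add hmspos, show (1-p) + (p-1) = 0 by ring,
              Real.rpow_zero, one_mul] at h
          have hsumCK : (ms:ℝ) ^ (q + 1) * NP 1 ≤ ∑ n ∈ Finset.range T, CK (n + 1) := by
            have hper : ∀ n ∈ Finset.range ms, (ms:ℝ) ^ q * NP 1 ≤ CK (n + 1) := by
              intro n hn
              have hn' : n + 1 ≤ ms := Finset.mem_range.1 hn
              have := hν2 (n+1) ms hn'
              calc (ms:ℝ) ^ q * NP 1 = (ms:ℝ) ^ q * |ψ ms| ^ p := by rw [hNP1eq]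
                _ ≤ CK (n + 1) := this
            calc (ms:ℝ) ^ (q + 1) * NP 1 = ∑ _n ∈ Finset.range ms, (ms:ℝ) ^ q * NP 1 := by
                  rw [Finset.sum_const, Finset.card_range, nsmul_eq_mul, ← mul_assoc]
                  rw [show ((ms:ℕ):ℝ) * (ms:ℝ) ^ q = (ms:ℝ) ^ (q + 1) by
                    rw [Real.rpow_add hmspos, Real.rpow_one]; ring]
              _ ≤ ∑ n ∈ Finset.range ms, CK (n + 1) := Finset.sum_le_sum hper
              _ ≤ ∑ n ∈ Finset.range T, CK (n + 1) :=
                  Finset.sum_le_sum_of_subset_of_nonneg (Finset.range_subset_range.2 hb)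
                    (fun i _ _ => hCK0 _)
          have hlast1 : t ^ (-q) * ((ms:ℝ) ^ (q + 1) * NP 1)
              ≤ t ^ (-q) * ∑ n ∈ Finset.range T, CK (n + 1) :=
            mul_le_mul_of_nonneg_left hsumCK htq0
          have hlast2 : (q - 1) * t ^ p * ((ms:ℝ) ^ (1 - p) * NP 1) ≤ (q - 1) * t ^ p * G :=
            mul_le_mul_of_nonneg_left hclimb'
              (mul_nonneg (by linarith) (Real.rpow_nonneg ht.le _))
          linarith
        · -- case (a) : T < ms
          have hterm : ∀ n ∈ Finset.range T, NP (n + 1) ≤ t ^ (-q) * CK (n + 1) := by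
            intro n hn
            have hn' : n + 1 ≤ ms := by
              have := Finset.mem_range.1 hn
              omega
            have h0 : NP (n + 1) ≤ NP 1 := hNPle 1 (n+1) (by omega)
            have hts : t ≤ (ms:ℝ) := by
              have h1 : t < (T:ℝ) + 1 := Nat.lt_floor_add_one t
              have h2 : (T:ℝ) + 1 ≤ (ms:ℝ) := by exact_mod_cast Nat.succ_le_of_lt ha
              linarith
            have h1 : t ^ q * NP 1 ≤ (ms:ℝ) ^ q * |ψ ms| ^ p := by
              rw [hNP1eq]
              exact mul_le_mul_of_nonneg_right (Real.rpow_le_rpow ht.le hts hq0.le)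
                (hA0 ms)
            have h2 : t ^ q * NP 1 ≤ CK (n + 1) := h1.trans (hν2 (n+1) ms hn')
            have h3 : NP 1 = t ^ (-q) * (t ^ q * NP 1) := by
              rw [Real.rpow_neg ht.le, ← mul_assoc, inv_mul_cancel₀ (ne_of_gt htqpos), one_mul]
            calc NP (n + 1) ≤ NP 1 := h0
              _ = t ^ (-q) * (t ^ q * NP 1) := h3
              _ ≤ t ^ (-q) * CK (n + 1) := mul_le_mul_of_nonneg_left h2 htq0
          have h := Finset.sum_le_sum hterm
          rw [← Finset.mul_sum] at h
          linarith
      rw [hBfin K hMK, hCfin K hMK]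
      calc ∑ n ∈ Finset.range K, NP (n + 1)
          = ∑ n ∈ Finset.range T, NP (n + 1) + ∑ n ∈ Finset.Ico T K, NP (n + 1) := hsplit
        _ ≤ ((q - 1) * t ^ p * G + t ^ (-q) * ∑ n ∈ Finset.range T, CK (n + 1))
            + t ^ (-q) * ∑ n ∈ Finset.Ico T K, CK (n + 1) := add_le_add piece2 piece1
        _ = (q - 1) * t ^ p * G + t ^ (-q) *
            (∑ n ∈ Finset.range T, CK (n + 1) + ∑ n ∈ Finset.Ico T K, CK (n + 1)) := by ring
        _ = (q - 1) * t ^ p * G + t ^ (-q) * ∑ n ∈ Finset.range K, CK (n + 1) := by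
            rw [← hCsplit]
    -- optimal t
    have hcore : B ≤ q * (G ^ (1/p) * C ^ (1/q)) := by
      have hCG : 0 < C / G := div_pos hCpos hGpos
      set t₀ := (C / G) ^ (1/(p+q)) with ht₀def
      have ht₀ : 0 < t₀ := Real.rpow_pos_of_pos hCG _
      have hpqsum : (0:ℝ) < p + q := by linarith
      have hmulpq : p + q = p * q := by field_simp at hpq; linarith
      have e1 : t₀ ^ p = (C / G) ^ (1/q) := by
        rw [ht₀def, ← Real.rpow_mul hCG.le]
        congr 1
        field_simp
        linarith [hmulpq]
      have e2 : t₀ ^ (-q) = (C / G) ^ (-(1/p)) := by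
        rw [ht₀def, ← Real.rpow_mul hCG.le]
        congr 1
        field_simp
        linarith [hmulpq]
      have key' := key t₀ ht₀
      rw [e1, e2] at key'
      have hGq : (0:ℝ) < G ^ (1/q) := Real.rpow_pos_of_pos hGpos _
      have hCp : (0:ℝ) < C ^ (1/p) := Real.rpow_pos_of_pos hCpos _
      have hGsplit : G ^ (1/q) * G ^ (1/p) = G := by
        rw [← Real.rpow_add hGpos, show 1/q + 1/p = 1 by linarith, Real.rpow_one]
      have hCsplit2 : C ^ (1/p) * C ^ (1/q) = C := by
        rw [← Real.rpow_add hCpos, show 1/p + 1/q = 1 by linarith, Real.rpow_one]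
      have hfin : (q - 1) * (C / G) ^ (1/q) * G + (C / G) ^ (-(1/p)) * C
          = q * (G ^ (1/p) * C ^ (1/q)) := by
        rw [Real.rpow_neg hCG.le, Real.div_rpow hCpos.le hGpos.le,
          Real.div_rpow hCpos.le hGpos.le, inv_div]
        field_simp
        linear_combination (-((q - 1) * C ^ (1/q) * C ^ (1/p))) * hGsplit
          + (-(G ^ (1/p) * G ^ (1/q))) * hCsplit2
      linarith [key', hfin.ge, hfin.le]
    -- T1 = 0 (Icc series not summable)
    have hQge : ∀ n : ℕ, m₁ ≤ n + 1 → |ψ m₁| ^ p ≤ ⨆ m ∈ Set.Icc 1 (n + 1), |ψ m| ^ p := by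
      intro n hn
      obtain ⟨m₀, hm₀mem, hm₀max⟩ := (Finset.Icc 1 (n+1)).exists_max_image
        (fun m => |ψ m| ^ p) ⟨1, Finset.mem_Icc.2 ⟨le_rfl, by omega⟩⟩
      have heq := biSup_eq_max (f := fun m => |ψ m| ^ p) (s := Set.Icc 1 (n+1))
        (hA0 m₀) (Set.mem_Icc.2 (Finset.mem_Icc.1 hm₀mem))
        (fun m hm => hm₀max m (Finset.mem_Icc.2 (Set.mem_Icc.1 hm)))
      rw [heq]
      exact hm₀max m₁ (Finset.mem_Icc.2 ⟨hm₁1, hn⟩)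
    have hT1 : (∑' (n:ℕ), ⨆ m ∈ Set.Icc 1 (n + 1), |ψ m| ^ p) = 0 := by
      apply tsum_eq_zero_of_not_summable
      intro hs
      have hev := hs.tendsto_atTop_zero.eventually_lt_const hApos
      obtain ⟨n, hlt, hge⟩ := (hev.and (Filter.eventually_ge_atTop m₁)).exists
      exact absurd (hQge n (by omega)) (not_le.2 hlt)
    -- assemble
    have hB0 : 0 ≤ B := tsum_nonneg fun n => hNP0 _
    have hG0 : (0:ℝ) ≤ G ^ (1/p) := Real.rpow_nonneg hGpos.le _
    rw [hT1, hT2, hX2, max_eq_right hB0]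
    have hfinal : ((p - 1) / p) * B ≤ G ^ (1/p) * C ^ (1/q) := by
      have hq_half : (p - 1) / p = 1 / q := by
        field_simp at hpq ⊢
        linarith
      rw [hq_half]
      calc (1/q) * B ≤ (1/q) * (q * (G ^ (1/p) * C ^ (1/q))) :=
            mul_le_mul_of_nonneg_left hcore (by positivity)
        _ = G ^ (1/p) * C ^ (1/q) := by field_simp
    refine hfinal.trans ?_
    exact mul_le_mul_of_nonneg_left (le_max_right _ _) hG0
end
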